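/- arXiv:2108.13167 — 4 statements merged into one kernel-verified Lean document; each statement's English description precedes it below -/
import Mathlib

section
/- Let ν ∈ ℤ_{>0}^m and μ ∈ ℤ_{>0}^n with ∑_{i∈I} ν_i = ∑_{j∈J} μ_j. Then there exists E ⊆ I × J with |E| = m + n − 1 such that (ν,μ,E) satisfies the CRP condition if and only if ∑_{i∈I} ν_i ≥ (m + n − 1)·gcd(ν,μ). -/
open scoped Classical

noncomputable section

variable {m n : ℕ}

/-- The transportation polytope `T_E(ν,μ)`: nonnegative `m × n` matrices with row sums `ν`,
column sums `μ`, supported on the edge set `E`. -/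
def transportationPolytope (ν : Fin m → ℝ) (μ : Fin n → ℝ)
    (E : Finset (Fin m × Fin n)) : Set (Fin m → Fin n → ℝ) :=
  {x | (∀ i j, 0 ≤ x i j) ∧ (∀ i, ∑ j, x i j = ν i) ∧
    (∀ j, ∑ i, x i j = μ j) ∧ ∀ i j, (i, j) ∉ E → x i j = 0}

/-- The neighborhood `N_F(S) = {j : ∃ i ∈ S, (i,j) ∈ F}`. -/
def nbr (F : Finset (Fin m × Fin n)) (S : Finset (Fin m)) : Finset (Fin n) :=
  Finset.univ.filter fun j => ∃ i ∈ S, (i, j) ∈ F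

/-- `ν` satisfies the capacity condition for `(μ, E)`. -/
def capacityCond (ν : Fin m → ℝ) (μ : Fin n → ℝ) (E : Finset (Fin m × Fin n)) : Prop :=
  ∀ S : Finset (Fin m), ∑ i ∈ S, ν i ≤ ∑ j ∈ nbr E S, μ j

/-- The CRP condition for `(ν, μ, E)`. -/
def crpCond (ν : Fin m → ℝ) (μ : Fin n → ℝ) (E : Finset (Fin m × Fin n)) : Prop :=
  (∑ i, ν i) = (∑ j, μ j) ∧
  ∀ S : Finset (Fin m), S.Nonempty → S ≠ Finset.univ →
    ∑ i ∈ S, ν i < ∑ j ∈ nbr E S, μ j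

/-- The bipartite simple graph `G(F)` on `I ⊔ J` determined by the edge set `F`. -/
def bipartiteGraph (F : Finset (Fin m × Fin n)) : SimpleGraph (Fin m ⊕ Fin n) :=
  SimpleGraph.fromRel fun u v => ∃ i j, u = Sum.inl i ∧ v = Sum.inr j ∧ (i, j) ∈ F

/-- The number of connected components of `G(F)`. -/
def numComponents (F : Finset (Fin m × Fin n)) : ℕ :=
  Nat.card (bipartiteGraph F).ConnectedComponent

/-- The set `E_r` of redundant edges of `T_E(ν,μ)`. -/
def redundantEdges (ν : Fin m → ℝ) (μ : Fin n → ℝ)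
    (E : Finset (Fin m × Fin n)) : Finset (Fin m × Fin n) :=
  E.filter fun e => ∀ x ∈ transportationPolytope ν μ E, x e.1 e.2 = 0

/-- The ERP number of `T_E(ν,μ)`: the number of connected components of `G(E ∖ E_r)`. -/
def erpNumber (ν : Fin m → ℝ) (μ : Fin n → ℝ) (E : Finset (Fin m × Fin n)) : ℕ :=
  numComponents (E \ redundantEdges ν μ E)

/-- The support edge set `B(x) = {(i,j) ∈ E : x_{ij} > 0}`. -/
def supportEdges (E : Finset (Fin m × Fin n)) (x : Fin m → Fin n → ℝ) :
    Finset (Fin m × Fin n) :=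
  E.filter fun e => 0 < x e.1 e.2

/-- The indicator vector `𝟙_S ∈ ℝ^m` of `S ⊆ I`. -/
def indicatorVec (S : Finset (Fin m)) : Fin m → ℝ := fun i => if i ∈ S then 1 else 0

/-- `S ⊆ I` is binding if `∑_{i∈S} ν_i = ∑_{j∈N_E(S)} μ_j`. -/
def IsBinding (ν : Fin m → ℝ) (μ : Fin n → ℝ) (E : Finset (Fin m × Fin n))
    (S : Finset (Fin m)) : Prop :=
  (∑ i ∈ S, ν i) = ∑ j ∈ nbr E S, μ j

/-- The greatest common divisor of all `m + n` components of `ν` and `μ`. -/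
def gcdVec (ν : Fin m → ℕ) (μ : Fin n → ℕ) : ℕ :=
  Nat.gcd (Finset.univ.gcd ν) (Finset.univ.gcd μ)

/-- `d_⋆ = max {1, m + n − (∑ᵢ νᵢ) / gcd(ν,μ)}`. -/
def dStar (ν : Fin m → ℕ) (μ : Fin n → ℕ) : ℕ :=
  max 1 (m + n - (∑ i, ν i) / gcdVec ν μ)

/-- The CRP-gap `δ_F(ν,μ)` of the edge set `F` (computed with respect to the redundant
edges of `T_F(ν,μ)`). -/
def crpGap (ν : Fin m → ℝ) (μ : Fin n → ℝ) (F : Finset (Fin m × Fin n)) : ℝ :=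
  sInf {t : ℝ | ∃ C : Finset (Fin m),
    (∑ i ∈ C, ν i) < (∑ j ∈ nbr (F \ redundantEdges ν μ F) C, μ j) ∧
    t = (∑ j ∈ nbr F C, μ j) - ∑ i ∈ C, ν i}

/-- The CRP-graph relation `R` on the connected components of `G(E ∖ E_r)`:
`R c₁ c₂` holds iff `c₁ ≠ c₂` and some edge `(i,j) ∈ E` has `i` in the demand side of `c₁`
and `j` in the supply side of `c₂`. -/
def crpRel (ν : Fin m → ℝ) (μ : Fin n → ℝ) (E : Finset (Fin m × Fin n)) :
    (bipartiteGraph (E \ redundantEdges ν μ E)).ConnectedComponent →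
    (bipartiteGraph (E \ redundantEdges ν μ E)).ConnectedComponent → Prop :=
  fun c₁ c₂ => c₁ ≠ c₂ ∧ ∃ i j, (i, j) ∈ E ∧
    (bipartiteGraph (E \ redundantEdges ν μ E)).connectedComponentMk (Sum.inl i) = c₁ ∧
    (bipartiteGraph (E \ redundantEdges ν μ E)).connectedComponentMk (Sum.inr j) = c₂

end

/-!
After dividing all weights by `g = gcd(ν, μ)` the claim reads `m + n - 1 ≤ ∑ ν`.

Necessity: peel leaves off the bipartite graph of `E`. A column whose only edge goes to row `i`
weighs less than `ν i` (strict Hall for `I ∖ {i}`), a row whose only edge goes to column `j`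
weighs less than `μ j` (strict Hall for `{i}`); deleting the leaf and subtracting its weight from
its neighbour preserves strict Hall. A column without edges is dropped: the edge it leaves in
excess of a spanning tree is paid for by its weight, which the rows now carry in excess of the
columns. Once all degrees are `≥ 2` the excess `k` is positive, and strict Hall for `I ∖ {i}`
makes every row weight exceed `k`.

Sufficiency: by induction on the total `N`, attach a vertex of minimal weight `w` as a leaf to a
heavier vertex on the other side and subtract `w` there. The smaller instance may have a gcd
`d > 1`, so the partner must satisfy `(m + n - 2) d ≤ N - w`. If no partner does, the gcds `d_j`
for the different partners `j` are `≥ 2`, pairwise coprime and divide all the other row weights,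
and their product, at least `2 ^ (n - 1)`, exceeds what the total allows.
-/

namespace HallTree

open Finset Function

section Weights

variable {α β : Type*} {A : Finset α} {B : Finset β} {a : α → ℕ} {b : β → ℕ}

lemma gcd_div {s : Finset α} {f : α → ℕ} {d : ℕ} (h : ∀ i ∈ s, d ∣ f i) (hd : 0 < d) :
    s.gcd (fun i => f i / d) = s.gcd f / d := by
  rw [eq_comm, Nat.div_eq_iff_eq_mul_left hd (Finset.dvd_gcd h)]
  calc s.gcd f = s.gcd (fun i => f i / d * d) :=
        gcd_congr rfl fun i hi => (Nat.div_mul_cancel (h i hi)).symm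
    _ = _ := by rw [Finset.gcd_mul_right, normalize_eq]

lemma gcd_gcd_dvd_left : ∀ i ∈ A, Nat.gcd (A.gcd a) (B.gcd b) ∣ a i :=
  fun _ hi => (Nat.gcd_dvd_left _ _).trans (gcd_dvd hi)

lemma gcd_gcd_dvd_right : ∀ j ∈ B, Nat.gcd (A.gcd a) (B.gcd b) ∣ b j :=
  fun _ hj => (Nat.gcd_dvd_right _ _).trans (gcd_dvd hj)

lemma add_card_add_card_le {w : ℕ} (hA : A.Nonempty) (hB : B.Nonempty)
    (hwA : ∀ i ∈ A, w ≤ a i) (hwB : ∀ j ∈ B, w ≤ b j)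
    (hsum : ∑ i ∈ A, a i = ∑ j ∈ B, b j) (hcard : A.card + B.card ≤ ∑ i ∈ A, a i + 1) :
    w + (A.card + B.card) ≤ ∑ i ∈ A, a i + 2 := by
  have hA' : A.card • w ≤ ∑ i ∈ A, a i := card_nsmul_le_sum A a w hwA
  have hB' : B.card • w ≤ ∑ i ∈ A, a i := hsum ▸ card_nsmul_le_sum B b w hwB
  have := hA.card_pos
  have := hB.card_pos
  rw [smul_eq_mul] at hA' hB'
  rcases le_or_gt w 1 with hw | hw
  · omega
  · nlinarith

lemma exists_leaf (hA : A.Nonempty) (hB : B.Nonempty) (hne : ∃ i ∈ A, ∃ j ∈ B, a i ≠ b j) :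
    (∃ i₀ ∈ A, (∀ i ∈ A, a i₀ ≤ a i) ∧ (∀ j ∈ B, a i₀ ≤ b j) ∧ ∃ j ∈ B, a i₀ < b j) ∨
      ∃ j₀ ∈ B, (∀ j ∈ B, b j₀ ≤ b j) ∧ (∀ i ∈ A, b j₀ ≤ a i) ∧ ∃ i ∈ A, b j₀ < a i := by
  obtain ⟨i₁, hi₁, hai₁⟩ := exists_min_image A a hA
  obtain ⟨j₁, hj₁, hbj₁⟩ := exists_min_image B b hB
  rcases lt_trichotomy (a i₁) (b j₁) with hlt | heq | hgt
  · exact Or.inl ⟨i₁, hi₁, hai₁, fun j hj => hlt.le.trans (hbj₁ j hj), j₁, hj₁, hlt⟩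
  · obtain ⟨i, hi, j, hj, hij⟩ := hne
    rcases (hai₁ i hi).lt_or_eq with hai | hai
    · exact Or.inr ⟨j₁, hj₁, hbj₁, fun i' hi' => heq ▸ hai₁ i' hi', i, hi, heq ▸ hai⟩
    · have hbj : a i₁ < b j := (heq.trans_le (hbj₁ j hj)).lt_of_ne (hai.trans_ne hij)
      exact Or.inl ⟨i₁, hi₁, hai₁, fun j' hj' => heq.trans_le (hbj₁ j' hj'), j, hj, hbj⟩
  · exact Or.inr ⟨j₁, hj₁, hbj₁, fun i hi => hgt.le.trans (hai₁ i hi), i₁, hi₁, hgt⟩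

structure IsAdmissible (A : Finset α) (B : Finset β) (a : α → ℕ) (b : β → ℕ) : Prop where
  nonempty_left : A.Nonempty
  nonempty_right : B.Nonempty
  pos_left : ∀ i ∈ A, 0 < a i
  pos_right : ∀ j ∈ B, 0 < b j
  sum_eq : ∑ i ∈ A, a i = ∑ j ∈ B, b j
  card_mul_gcd_le : (A.card + B.card - 1) * Nat.gcd (A.gcd a) (B.gcd b) ≤ ∑ i ∈ A, a i

namespace IsAdmissible

lemma swap (h : IsAdmissible A B a b) : IsAdmissible B A b a where
  nonempty_left := h.nonempty_right
  nonempty_right := h.nonempty_left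
  pos_left := h.pos_right
  pos_right := h.pos_left
  sum_eq := h.sum_eq.symm
  card_mul_gcd_le := by
    rw [add_comm, Nat.gcd_comm, ← h.sum_eq]
    exact h.card_mul_gcd_le

lemma gcd_pos (h : IsAdmissible A B a b) : 0 < Nat.gcd (A.gcd a) (B.gcd b) := by
  obtain ⟨i, hi⟩ := h.nonempty_left
  exact Nat.gcd_pos_of_pos_left _
    (Nat.pos_of_ne_zero fun h0 => (h.pos_left i hi).ne' (gcd_eq_zero_iff.1 h0 i hi))

lemma div_gcd (h : IsAdmissible A B a b) :
    IsAdmissible A B (fun i => a i / Nat.gcd (A.gcd a) (B.gcd b))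
      (fun j => b j / Nat.gcd (A.gcd a) (B.gcd b)) := by
  have hcop : Nat.gcd (A.gcd fun i => a i / Nat.gcd (A.gcd a) (B.gcd b))
      (B.gcd fun j => b j / Nat.gcd (A.gcd a) (B.gcd b)) = 1 := by
    rw [gcd_div gcd_gcd_dvd_left h.gcd_pos, gcd_div gcd_gcd_dvd_right h.gcd_pos]
    exact Nat.coprime_div_gcd_div_gcd h.gcd_pos
  refine ⟨h.nonempty_left, h.nonempty_right,
    fun i hi => Nat.div_pos (Nat.le_of_dvd (h.pos_left i hi) (gcd_gcd_dvd_left i hi)) h.gcd_pos,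
    fun j hj => Nat.div_pos (Nat.le_of_dvd (h.pos_right j hj) (gcd_gcd_dvd_right j hj)) h.gcd_pos,
    ?_, ?_⟩
  · rw [← Nat.sum_div gcd_gcd_dvd_left, ← Nat.sum_div gcd_gcd_dvd_right, h.sum_eq]
  · rw [hcop, mul_one, ← Nat.sum_div gcd_gcd_dvd_left]
    exact (Nat.le_div_iff_mul_le h.gcd_pos).2 h.card_mul_gcd_le

lemma exists_ne_of_gcd_eq_one (h : IsAdmissible A B a b) (hg : Nat.gcd (A.gcd a) (B.gcd b) = 1)
    (hA : 2 ≤ A.card) : ∃ i ∈ A, ∃ j ∈ B, a i ≠ b j := by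
  by_contra! heq
  obtain ⟨i₁, hi₁⟩ := h.nonempty_left
  obtain ⟨j₁, hj₁⟩ := h.nonempty_right
  have hb : ∀ j ∈ B, b j = b j₁ := fun j hj => (heq i₁ hi₁ j hj).symm.trans (heq i₁ hi₁ j₁ hj₁)
  have hone : b j₁ = 1 := Nat.dvd_one.1 <| hg ▸ Nat.dvd_gcd
    (Finset.dvd_gcd fun i hi => heq i hi j₁ hj₁ ▸ dvd_rfl)
    (Finset.dvd_gcd fun j hj => hb j hj ▸ dvd_rfl)
  have hA' := sum_const_nat fun i hi => (heq i hi j₁ hj₁).trans hone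
  have hB' := sum_const_nat fun j hj => (hb j hj).trans hone
  have := h.card_mul_gcd_le
  rw [hg, h.sum_eq] at this
  rw [h.sum_eq] at hA'
  omega

end IsAdmissible

end Weights

variable {α β : Type*} [DecidableEq α] [DecidableEq β]

def nbhd (E : Finset (α × β)) (S : Finset α) : Finset β :=
  (E.filter fun e => e.1 ∈ S).image Prod.snd

@[simp]
lemma mem_nbhd {E : Finset (α × β)} {S : Finset α} {j : β} :
    j ∈ nbhd E S ↔ ∃ i ∈ S, (i, j) ∈ E := by
  simp only [nbhd, mem_image, mem_filter, Prod.exists, exists_eq_right]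
  exact ⟨fun ⟨i, hE, hS⟩ => ⟨i, hS, hE⟩, fun ⟨i, hS, hE⟩ => ⟨i, hE, hS⟩⟩

lemma nbhd_mono {E F : Finset (α × β)} {S T : Finset α} (hEF : E ⊆ F) (hST : S ⊆ T) :
    nbhd E S ⊆ nbhd F T := by
  intro j
  simp only [mem_nbhd]
  exact fun ⟨i, hi, he⟩ => ⟨i, hST hi, hEF he⟩

lemma nbhd_subset {E : Finset (α × β)} {A : Finset α} {B : Finset β} (hE : E ⊆ A ×ˢ B)
    (S : Finset α) : nbhd E S ⊆ B := by
  intro j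
  simp only [mem_nbhd]
  exact fun ⟨i, _, he⟩ => (mem_product.1 (hE he)).2

lemma nbhd_insert (E : Finset (α × β)) (S : Finset α) (i₀ : α) (j₀ : β) :
    nbhd (insert (i₀, j₀) E) S = if i₀ ∈ S then insert j₀ (nbhd E S) else nbhd E S := by
  ext j
  split_ifs with h <;> simp only [mem_nbhd, mem_insert, Prod.mk.injEq] <;> grind

def StrictHall (E : Finset (α × β)) (A : Finset α) (a : α → ℕ) (b : β → ℕ) : Prop :=
  ∀ S ⊆ A, S.Nonempty → S ≠ A → ∑ i ∈ S, a i < ∑ j ∈ nbhd E S, b j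

section Update

variable {X B : Finset β} {b : β → ℕ} {j₀ : β} {w : ℕ}

lemma sum_update_sub_add (hj₀ : j₀ ∈ X) (hw : w ≤ b j₀) :
    ∑ j ∈ X, update b j₀ (b j₀ - w) j + w = ∑ j ∈ X, b j := by
  rw [sum_update_of_mem hj₀, sdiff_singleton_eq_erase, ← add_sum_erase X b hj₀]
  omega

lemma sum_update_sub_add_le (hw : w ≤ b j₀) :
    ∑ j ∈ X, update b j₀ (b j₀ - w) j + w ≤ ∑ j ∈ insert j₀ X, b j := by
  by_cases hj₀ : j₀ ∈ X
  · rw [insert_eq_of_mem hj₀, sum_update_sub_add hj₀ hw]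
  · rw [sum_insert hj₀, sum_update_of_notMem hj₀]
    omega

lemma update_sub_pos (hb : ∀ j ∈ B, 0 < b j) (hlt : w < b j₀) :
    ∀ j ∈ B, 0 < update b j₀ (b j₀ - w) j := by
  intro j hj
  rcases eq_or_ne j j₀ with rfl | hne
  · simpa using hlt
  · simpa [hne] using hb j hj

end Update

section StrictHall

variable {E : Finset (α × β)} {A : Finset α} {B : Finset β} {a : α → ℕ} {b : β → ℕ}
  {i₀ : α} {j₀ : β}

theorem strictHall_div_iff {g : ℕ} (hE : E ⊆ A ×ˢ B) (ha : ∀ i ∈ A, g ∣ a i)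
    (hb : ∀ j ∈ B, g ∣ b j) :
    StrictHall E A (fun i => a i / g) (fun j => b j / g) ↔ StrictHall E A a b := by
  refine forall₂_congr fun S hS => ?_
  rw [← Nat.sum_div fun i hi => ha i (hS hi), ← Nat.sum_div fun j hj => hb j (nbhd_subset hE S hj)]
  exact imp_congr_right fun _ => imp_congr_right fun _ => ⟨Nat.lt_of_div_lt_div,
    Nat.div_lt_div_of_lt_of_dvd (dvd_sum fun j hj => hb j (nbhd_subset hE S hj))⟩

theorem strictHall_insert_iff_of_col_leaf (hleaf : ∀ i, (i, j₀) ∉ E) (hle : b j₀ ≤ a i₀) :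
    StrictHall (insert (i₀, j₀) E) A a b ↔ StrictHall E A (update a i₀ (a i₀ - b j₀)) b := by
  refine forall₂_congr fun S hS => ?_
  rw [nbhd_insert]
  split_ifs with hi₀S
  · have hj₀ : j₀ ∉ nbhd E S := by simp [hleaf]
    have := sum_update_sub_add hi₀S hle
    rw [sum_insert hj₀]
    constructor <;> intro h hne hSA <;> have := h hne hSA <;> omega
  · rw [sum_update_of_notMem hi₀S]

theorem StrictHall.of_insert_row_leaf (h : StrictHall (insert (i₀, j₀) E) A a b)
    (hleaf : ∀ j, (i₀, j) ∉ E) (hi₀ : i₀ ∈ A) (hle : a i₀ ≤ b j₀) :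
    StrictHall E (A.erase i₀) a (update b j₀ (b j₀ - a i₀)) := by
  intro S hS hne hSA
  have hi₀S : i₀ ∉ S := fun h => (notMem_erase i₀ A) (hS h)
  by_cases hj₀ : j₀ ∈ nbhd E S
  · have hSA' : insert i₀ S ≠ A := by
      rintro rfl
      exact hSA (erase_insert hi₀S).symm
    have hbig := h (insert i₀ S) (insert_subset hi₀ (hS.trans (erase_subset _ _)))
      (insert_nonempty _ _) hSA'
    have hnbhd : nbhd E (insert i₀ S) = nbhd E S := by
      ext j
      simp only [mem_nbhd, mem_insert]
      grind
    rw [sum_insert hi₀S, nbhd_insert, if_pos (mem_insert_self _ _), hnbhd,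
      insert_eq_of_mem hj₀] at hbig
    have := sum_update_sub_add hj₀ hle
    omega
  · have hsmall := h S (hS.trans (erase_subset _ _)) hne
      (fun hSA' => hi₀S (hSA' ▸ hi₀))
    rw [nbhd_insert, if_neg hi₀S] at hsmall
    rwa [sum_update_of_notMem hj₀]

theorem StrictHall.insert_row_leaf (h : StrictHall E (A.erase i₀) a (update b j₀ (b j₀ - a i₀)))
    (hi₀ : i₀ ∈ A) (hlt : a i₀ < b j₀)
    (hrest : ∑ i ∈ A.erase i₀, a i < ∑ j ∈ nbhd E (A.erase i₀), b j) :
    StrictHall (insert (i₀, j₀) E) A a b := by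
  intro S hS hne hSA
  rw [nbhd_insert]
  split_ifs with hi₀S
  · rw [← add_sum_erase S a hi₀S]
    have hmono : ∑ j ∈ insert j₀ (nbhd E (S.erase i₀)), b j ≤ ∑ j ∈ insert j₀ (nbhd E S), b j :=
      sum_le_sum_of_subset (insert_subset_insert _ (nbhd_mono subset_rfl (erase_subset _ _)))
    have hle := sum_update_sub_add_le (X := nbhd E (S.erase i₀)) hlt.le
    rcases (S.erase i₀).eq_empty_or_nonempty with hS' | hS'
    · have := single_le_sum (f := b) (fun _ _ => Nat.zero_le _) (mem_insert_self j₀ (nbhd E S))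
      rw [hS', sum_empty]
      omega
    · have hS'A : S.erase i₀ ≠ A.erase i₀ := by
        intro heq
        exact hSA (by rw [← insert_erase hi₀S, heq, insert_erase hi₀])
      have := h (S.erase i₀) (erase_subset_erase i₀ hS) hS' hS'A
      omega
  · have hS' : S ⊆ A.erase i₀ := fun i hi => mem_erase.2 ⟨fun h => hi₀S (h ▸ hi), hS hi⟩
    rcases eq_or_ne S (A.erase i₀) with rfl | hS'A
    · exact hrest
    · refine (h S hS' hne hS'A).trans_le (sum_le_sum fun j _ => ?_)
      rcases eq_or_ne j j₀ with rfl | hj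
      · simp
      · simp [hj]

end StrictHall

section Necessity

variable {E : Finset (α × β)} {A : Finset α} {B : Finset β} {a : α → ℕ} {b : β → ℕ}
  {i₀ : α} {j₀ : β} {k : ℕ}

lemma exists_eq_insert_of_card_filter_snd_eq_one {j : β}
    (h : (E.filter fun e => e.2 = j).card = 1) :
    ∃ i E', E = insert (i, j) E' ∧ ∀ i', (i', j) ∉ E' := by
  obtain ⟨⟨i, j'⟩, he⟩ := card_eq_one.1 h
  have hmem : (i, j') ∈ E.filter fun e => e.2 = j := he ▸ mem_singleton_self _
  obtain ⟨hE, rfl⟩ := mem_filter.1 hmem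
  refine ⟨i, E.erase (i, j'), (insert_erase hE).symm, fun i' hi' => ?_⟩
  have : (i', j') ∈ E.filter fun e => e.2 = j' := mem_filter.2 ⟨mem_of_mem_erase hi', rfl⟩
  rw [he, mem_singleton] at this
  exact (mem_erase.1 hi').1 this

lemma exists_eq_insert_of_card_filter_fst_eq_one {i : α}
    (h : (E.filter fun e => e.1 = i).card = 1) :
    ∃ j E', E = insert (i, j) E' ∧ ∀ j', (i, j') ∉ E' := by
  obtain ⟨⟨i', j⟩, he⟩ := card_eq_one.1 h
  have hmem : (i', j) ∈ E.filter fun e => e.1 = i := he ▸ mem_singleton_self _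
  obtain ⟨hE, rfl⟩ := mem_filter.1 hmem
  refine ⟨j, E.erase (i', j), (insert_erase hE).symm, fun j' hj' => ?_⟩
  have : (i', j') ∈ E.filter fun e => e.1 = i' := mem_filter.2 ⟨mem_of_mem_erase hj', rfl⟩
  rw [he, mem_singleton] at this
  exact (mem_erase.1 hj').1 this

structure HallSurplus (E : Finset (α × β)) (A : Finset α) (B : Finset β) (a : α → ℕ)
    (b : β → ℕ) (k : ℕ) : Prop where
  subset : E ⊆ A ×ˢ B
  pos_left : ∀ i ∈ A, 0 < a i
  pos_right : ∀ j ∈ B, 0 < b j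
  strictHall : StrictHall E A a b
  card_le : E.card + 1 ≤ A.card + B.card + k
  sum_le : ∑ j ∈ B, b j + k ≤ ∑ i ∈ A, a i

namespace HallSurplus

lemma sum_sdiff_nbhd_add_lt (h : HallSurplus E A B a b k) (hA : 2 ≤ A.card) {i : α}
    (hi : i ∈ A) : ∑ j ∈ B \ nbhd E (A.erase i), b j + k < a i := by
  have hne : (A.erase i).Nonempty := by
    rw [← card_pos, card_erase_of_mem hi]
    omega
  have hhall := h.strictHall (A.erase i) (erase_subset _ _) hne (erase_ne_self.2 hi)
  have hB := sum_sdiff (f := b) (nbhd_subset h.subset (A.erase i))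
  have hA := add_sum_erase A a hi
  have := h.sum_le
  omega

lemma exists_edge_of_mem_left (h : HallSurplus E A B a b k) (hA : 2 ≤ A.card) {i : α}
    (hi : i ∈ A) : ∃ j, (i, j) ∈ E := by
  have hA' : {i} ≠ A := fun hA' => by simp [← hA'] at hA
  have hhall := h.strictHall {i} (singleton_subset_iff.2 hi) (singleton_nonempty i) hA'
  rw [sum_singleton] at hhall
  obtain ⟨j, hj, -⟩ := exists_ne_zero_of_sum_ne_zero (by omega : ∑ j ∈ nbhd E {i}, b j ≠ 0)
  obtain ⟨i', hi', hE⟩ := mem_nbhd.1 hj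
  exact ⟨j, mem_singleton.1 hi' ▸ hE⟩

lemma erase_isolated (h : HallSurplus E A B a b k) (hj₀ : j₀ ∈ B) (hiso : j₀ ∉ nbhd E A) :
    HallSurplus E A (B.erase j₀) a b (k + 1) where
  subset e he := by
    obtain ⟨hi, hj⟩ := mem_product.1 (h.subset he)
    refine mem_product.2 ⟨hi, mem_erase.2 ⟨fun hj₀' => hiso ?_, hj⟩⟩
    exact mem_nbhd.2 ⟨e.1, hi, hj₀' ▸ he⟩
  pos_left := h.pos_left
  pos_right j hj := h.pos_right j (mem_of_mem_erase hj)
  strictHall := h.strictHall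
  card_le := by
    have := h.card_le
    have := card_erase_of_mem hj₀
    have := card_pos.2 ⟨j₀, hj₀⟩
    omega
  sum_le := by
    have := h.sum_le
    have := sum_erase_add B b hj₀
    have := h.pos_right j₀ hj₀
    omega

lemma col_leaf_lt (h : HallSurplus (insert (i₀, j₀) E) A B a b k) (hleaf : ∀ i, (i, j₀) ∉ E)
    (hA : 2 ≤ A.card) : b j₀ + k < a i₀ := by
  obtain ⟨hi₀, hj₀⟩ : i₀ ∈ A ∧ j₀ ∈ B := mem_product.1 (h.subset (mem_insert_self _ _))
  have hj₀' : j₀ ∈ B \ nbhd (insert (i₀, j₀) E) (A.erase i₀) := by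
    simp [hj₀, hleaf]
  have := single_le_sum (f := b) (fun _ _ => Nat.zero_le _) hj₀'
  have := h.sum_sdiff_nbhd_add_lt hA hi₀
  omega

lemma erase_col_leaf (h : HallSurplus (insert (i₀, j₀) E) A B a b k) (hleaf : ∀ i, (i, j₀) ∉ E)
    (hA : 2 ≤ A.card) : HallSurplus E A (B.erase j₀) (update a i₀ (a i₀ - b j₀)) b k := by
  obtain ⟨hi₀, hj₀⟩ : i₀ ∈ A ∧ j₀ ∈ B := mem_product.1 (h.subset (mem_insert_self _ _))
  have hlt := h.col_leaf_lt hleaf hA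
  refine ⟨fun e he => ?_, update_sub_pos h.pos_left (by omega),
    fun j hj => h.pos_right j (mem_of_mem_erase hj),
    (strictHall_insert_iff_of_col_leaf hleaf (by omega)).1 h.strictHall, ?_, ?_⟩
  · obtain ⟨hi, hj⟩ := mem_product.1 (h.subset (mem_insert_of_mem he))
    exact mem_product.2 ⟨hi, mem_erase.2 ⟨fun hj₀' => hleaf e.1 (hj₀' ▸ he), hj⟩⟩
  · have := h.card_le
    rw [card_insert_of_notMem (hleaf i₀)] at this
    have := card_erase_of_mem hj₀
    have := card_pos.2 ⟨j₀, hj₀⟩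
    omega
  · have := h.sum_le
    have := sum_erase_add B b hj₀
    have := sum_update_sub_add hi₀ (by omega : b j₀ ≤ a i₀)
    omega

lemma row_leaf_lt (h : HallSurplus (insert (i₀, j₀) E) A B a b k) (hleaf : ∀ j, (i₀, j) ∉ E)
    (hA : 2 ≤ A.card) : a i₀ < b j₀ := by
  obtain ⟨hi₀, -⟩ : i₀ ∈ A ∧ j₀ ∈ B := mem_product.1 (h.subset (mem_insert_self _ _))
  have hA' : {i₀} ≠ A := fun hA' => by simp [← hA'] at hA
  have hnbhd : nbhd (insert (i₀, j₀) E) {i₀} = {j₀} := by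
    ext j
    simp only [mem_nbhd, mem_singleton, mem_insert, Prod.mk.injEq]
    grind
  simpa [hnbhd] using h.strictHall {i₀} (singleton_subset_iff.2 hi₀) (singleton_nonempty _) hA'

lemma erase_row_leaf (h : HallSurplus (insert (i₀, j₀) E) A B a b k) (hleaf : ∀ j, (i₀, j) ∉ E)
    (hA : 2 ≤ A.card) : HallSurplus E (A.erase i₀) B a (update b j₀ (b j₀ - a i₀)) k := by
  obtain ⟨hi₀, hj₀⟩ : i₀ ∈ A ∧ j₀ ∈ B := mem_product.1 (h.subset (mem_insert_self _ _))
  have hlt := h.row_leaf_lt hleaf hA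
  refine ⟨fun e he => ?_, fun i hi => h.pos_left i (mem_of_mem_erase hi),
    update_sub_pos h.pos_right hlt, h.strictHall.of_insert_row_leaf hleaf hi₀ hlt.le, ?_, ?_⟩
  · obtain ⟨hi, hj⟩ := mem_product.1 (h.subset (mem_insert_of_mem he))
    exact mem_product.2 ⟨mem_erase.2 ⟨fun hi₀' => hleaf e.2 (hi₀' ▸ he), hi⟩, hj⟩
  · have := h.card_le
    rw [card_insert_of_notMem (hleaf j₀)] at this
    have := card_erase_of_mem hi₀
    have := card_pos.2 ⟨i₀, hi₀⟩
    omega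
  · have := h.sum_le
    have := sum_erase_add A a hi₀
    have := sum_update_sub_add hj₀ hlt.le
    omega

lemma card_add_card_add_le_of_no_leaf (h : HallSurplus E A B a b k) (hA : 2 ≤ A.card)
    (hcov : ∀ j ∈ B, j ∈ nbhd E A)
    (hrow : ∀ i ∈ A, (E.filter fun e => e.1 = i).card ≠ 1)
    (hcol : ∀ j ∈ B, (E.filter fun e => e.2 = j).card ≠ 1) :
    A.card + B.card + k ≤ ∑ i ∈ A, a i + 1 := by
  have hrow2 : ∀ i ∈ A, 2 ≤ (E.filter fun e => e.1 = i).card := fun i hi => by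
    obtain ⟨j, hj⟩ := h.exists_edge_of_mem_left hA hi
    have : 0 < (E.filter fun e => e.1 = i).card := card_pos.2 ⟨(i, j), mem_filter.2 ⟨hj, rfl⟩⟩
    have := hrow i hi
    omega
  have hcol2 : ∀ j ∈ B, 2 ≤ (E.filter fun e => e.2 = j).card := fun j hj => by
    obtain ⟨i, -, hi⟩ := mem_nbhd.1 (hcov j hj)
    have : 0 < (E.filter fun e => e.2 = j).card := card_pos.2 ⟨(i, j), mem_filter.2 ⟨hi, rfl⟩⟩
    have := hcol j hj
    omega
  have hEA : A.card • 2 ≤ E.card := by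
    rw [card_eq_sum_card_fiberwise fun e he => (mem_product.1 (h.subset he)).1]
    exact card_nsmul_le_sum _ _ _ hrow2
  have hEB : B.card • 2 ≤ E.card := by
    rw [card_eq_sum_card_fiberwise fun e he => (mem_product.1 (h.subset he)).2]
    exact card_nsmul_le_sum _ _ _ hcol2
  have hsum : A.card • (k + 1) ≤ ∑ i ∈ A, a i :=
    card_nsmul_le_sum _ _ _ fun i hi => by have := h.sum_sdiff_nbhd_add_lt hA hi; omega
  have := h.card_le
  simp only [smul_eq_mul] at hEA hEB hsum
  nlinarith

end HallSurplus

end Necessity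

theorem HallSurplus.card_add_card_add_le {E : Finset (α × β)} {A : Finset α} {B : Finset β}
    {a : α → ℕ} {b : β → ℕ} {k : ℕ} (h : HallSurplus E A B a b k) :
    A.card + B.card + k ≤ ∑ i ∈ A, a i + 1 := by
  induction hn : A.card + B.card using Nat.strong_induction_on generalizing E A B a b k with
  | _ n ih =>
  subst hn
  by_cases hA : A.card ≤ 1
  · have hB : B.card • 1 ≤ ∑ j ∈ B, b j := card_nsmul_le_sum B b 1 h.pos_right
    have := h.sum_le
    rw [smul_eq_mul, mul_one] at hB
    omega
  rw [not_le] at hA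
  by_cases hiso : ∃ j₀ ∈ B, j₀ ∉ nbhd E A
  · obtain ⟨j₀, hj₀, hiso⟩ := hiso
    have := card_erase_of_mem hj₀
    have := card_pos.2 ⟨j₀, hj₀⟩
    have := ih _ (by omega) (h.erase_isolated hj₀ hiso) rfl
    omega
  by_cases hcol : ∃ j₀ ∈ B, (E.filter fun e => e.2 = j₀).card = 1
  · obtain ⟨j₀, hj₀, hdeg⟩ := hcol
    obtain ⟨i₀, E, rfl, hleaf⟩ := exists_eq_insert_of_card_filter_snd_eq_one hdeg
    have hi₀ : i₀ ∈ A := (mem_product.1 (h.subset (mem_insert_self _ _))).1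
    have := card_erase_of_mem hj₀
    have := card_pos.2 ⟨j₀, hj₀⟩
    have := ih _ (by omega) (h.erase_col_leaf hleaf hA) rfl
    have := h.col_leaf_lt hleaf hA
    have := sum_update_sub_add hi₀ (by omega : b j₀ ≤ a i₀)
    have := h.pos_right j₀ hj₀
    omega
  by_cases hrow : ∃ i₀ ∈ A, (E.filter fun e => e.1 = i₀).card = 1
  · obtain ⟨i₀, hi₀, hdeg⟩ := hrow
    obtain ⟨j₀, E, rfl, hleaf⟩ := exists_eq_insert_of_card_filter_fst_eq_one hdeg
    have := card_erase_of_mem hi₀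
    have := ih _ (by omega) (h.erase_row_leaf hleaf hA) rfl
    have := sum_erase_add A a hi₀
    have := h.pos_left i₀ hi₀
    omega
  push Not at hiso hcol hrow
  exact h.card_add_card_add_le_of_no_leaf hA hiso hrow hcol

section Sufficiency

variable {E : Finset (α × β)} {A : Finset α} {B : Finset β} {a : α → ℕ} {b : β → ℕ}
  {i₀ : α} {j₀ : β}

structure IsHallTree (E : Finset (α × β)) (A : Finset α) (B : Finset β) (a : α → ℕ)
    (b : β → ℕ) : Prop where
  subset : E ⊆ A ×ˢ B
  card_add_one : E.card + 1 = A.card + B.card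
  covers : B ⊆ nbhd E A
  strictHall : StrictHall E A a b

lemma isHallTree_product_of_card_left_eq_one (hA : A.card = 1) :
    IsHallTree (A ×ˢ B) A B a b where
  subset := subset_rfl
  card_add_one := by rw [card_product, hA, one_mul, add_comm]
  covers j hj := by
    obtain ⟨i, hi⟩ := card_pos.1 (hA ▸ Nat.one_pos)
    exact mem_nbhd.2 ⟨i, hi, mem_product.2 ⟨hi, hj⟩⟩
  strictHall S hS hne hSA := by
    obtain ⟨i, rfl⟩ := card_eq_one.1 hA
    exact absurd ((subset_singleton_iff.1 hS).resolve_left hne.ne_empty) hSA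

lemma isHallTree_product_of_card_right_eq_one (hB : B.card = 1) (hA : A.Nonempty)
    (ha : ∀ i ∈ A, 0 < a i) (hsum : ∑ i ∈ A, a i = ∑ j ∈ B, b j) :
    IsHallTree (A ×ˢ B) A B a b where
  subset := subset_rfl
  card_add_one := by rw [card_product, hB, mul_one]
  covers j hj := by
    obtain ⟨i, hi⟩ := hA
    exact mem_nbhd.2 ⟨i, hi, mem_product.2 ⟨hi, hj⟩⟩
  strictHall S hS hne hSA := by
    have hN : nbhd (A ×ˢ B) S = B := by
      refine (nbhd_subset subset_rfl S).antisymm fun j hj => ?_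
      obtain ⟨i, hi⟩ := hne
      exact mem_nbhd.2 ⟨i, hi, mem_product.2 ⟨hS hi, hj⟩⟩
    obtain ⟨i, hiA, hiS⟩ := exists_of_ssubset (Finset.ssubset_iff_subset_ne.2 ⟨hS, hSA⟩)
    rw [hN, ← hsum]
    exact sum_lt_sum_of_subset hS hiA hiS (ha i hiA) fun _ _ _ => Nat.zero_le _

lemma IsHallTree.of_div {g : ℕ} (h : IsHallTree E A B (fun i => a i / g) (fun j => b j / g))
    (ha : ∀ i ∈ A, g ∣ a i) (hb : ∀ j ∈ B, g ∣ b j) : IsHallTree E A B a b :=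
  ⟨h.subset, h.card_add_one, h.covers, (strictHall_div_iff h.subset ha hb).1 h.strictHall⟩

lemma IsHallTree.insert_row_leaf (h : IsHallTree E (A.erase i₀) B a (update b j₀ (b j₀ - a i₀)))
    (hi₀ : i₀ ∈ A) (hj₀ : j₀ ∈ B) (hpos : 0 < a i₀) (hlt : a i₀ < b j₀)
    (hsum : ∑ i ∈ A, a i = ∑ j ∈ B, b j) : IsHallTree (insert (i₀, j₀) E) A B a b := by
  have hE : (i₀, j₀) ∉ E := fun hE => by simpa using (mem_product.1 (h.subset hE)).1
  refine ⟨insert_subset (mem_product.2 ⟨hi₀, hj₀⟩)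
      (h.subset.trans (product_subset_product_left (erase_subset _ _))), ?_,
    h.covers.trans (nbhd_mono (subset_insert _ _) (erase_subset _ _)),
    h.strictHall.insert_row_leaf hi₀ hlt ?_⟩
  · have := h.card_add_one
    rw [card_erase_of_mem hi₀] at this
    rw [card_insert_of_notMem hE]
    have := card_pos.2 ⟨i₀, hi₀⟩
    omega
  · have := add_sum_erase A a hi₀
    have := sum_le_sum_of_subset (f := b) h.covers
    omega

lemma IsHallTree.insert_col_leaf (h : IsHallTree E A (B.erase j₀) (update a i₀ (a i₀ - b j₀)) b)
    (hi₀ : i₀ ∈ A) (hj₀ : j₀ ∈ B) (hle : b j₀ ≤ a i₀) :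
    IsHallTree (insert (i₀, j₀) E) A B a b := by
  have hleaf : ∀ i, (i, j₀) ∉ E := fun i hE => by simpa using (mem_product.1 (h.subset hE)).2
  refine ⟨insert_subset (mem_product.2 ⟨hi₀, hj₀⟩)
      (h.subset.trans (product_subset_product_right (erase_subset _ _))), ?_, fun j hj => ?_,
    (strictHall_insert_iff_of_col_leaf hleaf hle).2 h.strictHall⟩
  · have := h.card_add_one
    rw [card_erase_of_mem hj₀] at this
    rw [card_insert_of_notMem (hleaf i₀)]
    have := card_pos.2 ⟨j₀, hj₀⟩
    omega
  · rcases eq_or_ne j j₀ with rfl | hne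
    · exact mem_nbhd.2 ⟨i₀, hi₀, mem_insert_self _ _⟩
    · exact nbhd_mono (subset_insert _ _) subset_rfl (h.covers (mem_erase.2 ⟨hne, hj⟩))

def leafGcd (A : Finset α) (B : Finset β) (a : α → ℕ) (b : β → ℕ) (i₀ : α) (j : β) : ℕ :=
  Nat.gcd ((A.erase i₀).gcd a) (B.gcd (update b j (b j - a i₀)))

lemma leafGcd_dvd_left (j : β) {i : α} (hi : i ∈ A.erase i₀) : leafGcd A B a b i₀ j ∣ a i :=
  (Nat.gcd_dvd_left _ _).trans (gcd_dvd hi)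

lemma leafGcd_dvd_right (j : β) {j' : β} (hj' : j' ∈ B) :
    leafGcd A B a b i₀ j ∣ update b j (b j - a i₀) j' :=
  (Nat.gcd_dvd_right _ _).trans (gcd_dvd hj')

lemma dvd_gcd_of_dvd_leafGcd {e : ℕ} {j : β} (hi₀ : i₀ ∈ A) (hj : a i₀ ≤ b j)
    (he : e ∣ leafGcd A B a b i₀ j) (hei₀ : e ∣ a i₀) : e ∣ Nat.gcd (A.gcd a) (B.gcd b) := by
  refine Nat.dvd_gcd (Finset.dvd_gcd fun i hi => ?_) (Finset.dvd_gcd fun j' hj' => ?_)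
  · rcases eq_or_ne i i₀ with rfl | hne
    · exact hei₀
    · exact he.trans (leafGcd_dvd_left j (mem_erase.2 ⟨hne, hi⟩))
  · have h' := he.trans (leafGcd_dvd_right j hj')
    rcases eq_or_ne j' j with rfl | hne
    · rw [update_self] at h'
      simpa [Nat.sub_add_cancel hj] using Nat.dvd_add h' hei₀
    · rwa [update_of_ne hne] at h'

lemma coprime_leafGcd (hi₀ : i₀ ∈ A) (hgcd : Nat.gcd (A.gcd a) (B.gcd b) = 1) {j j' : β}
    (hj : j ∈ B) (hne : j ≠ j') (hmin : a i₀ ≤ b j) :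
    Nat.Coprime (leafGcd A B a b i₀ j) (leafGcd A B a b i₀ j') := by
  have h1 : Nat.gcd (leafGcd A B a b i₀ j) (leafGcd A B a b i₀ j') ∣ b j := by
    have : leafGcd A B a b i₀ j' ∣ update b j' (b j' - a i₀) j := leafGcd_dvd_right j' hj
    rw [update_of_ne hne] at this
    exact (Nat.gcd_dvd_right _ _).trans this
  have h2 : Nat.gcd (leafGcd A B a b i₀ j) (leafGcd A B a b i₀ j') ∣ b j - a i₀ := by
    have : leafGcd A B a b i₀ j ∣ update b j (b j - a i₀) j := leafGcd_dvd_right j hj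
    rw [update_self] at this
    exact (Nat.gcd_dvd_left _ _).trans this
  have h3 := Nat.dvd_sub h1 h2
  rw [Nat.sub_sub_self hmin] at h3
  exact Nat.dvd_one.1 (hgcd ▸ dvd_gcd_of_dvd_leafGcd hi₀ hmin (Nat.gcd_dvd_left _ _) h3)

lemma lt_of_two_le_leafGcd (hi₀ : i₀ ∈ A) (hmin : ∀ j ∈ B, a i₀ ≤ b j)
    (hgcd : Nat.gcd (A.gcd a) (B.gcd b) = 1) {js : β} (hjs : js ∈ B) (hlt : a i₀ < b js)
    (hD : 2 ≤ leafGcd A B a b i₀ js) : ∀ j ∈ B, a i₀ < b j := by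
  intro j hj
  refine (hmin j hj).lt_of_ne fun heq => ?_
  have hne : j ≠ js := by rintro rfl; omega
  have hdvd : leafGcd A B a b i₀ js ∣ update b js (b js - a i₀) j := leafGcd_dvd_right js hj
  rw [update_of_ne hne, ← heq] at hdvd
  have : leafGcd A B a b i₀ js = 1 :=
    Nat.dvd_one.1 (hgcd ▸ dvd_gcd_of_dvd_leafGcd hi₀ (hmin js hjs) dvd_rfl hdvd)
  omega

lemma card_sub_one_mul_prod_leafGcd_le (hi₀ : i₀ ∈ A) (ha : ∀ i ∈ A, 0 < a i)
    (hmin : ∀ j ∈ B, a i₀ ≤ b j) (hgcd : Nat.gcd (A.gcd a) (B.gcd b) = 1) :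
    (A.card - 1) * ∏ j ∈ B, leafGcd A B a b i₀ j ≤ ∑ i ∈ A.erase i₀, a i := by
  rw [← card_erase_of_mem hi₀, ← smul_eq_mul]
  refine card_nsmul_le_sum _ _ _ fun i hi => Nat.le_of_dvd (ha i (mem_of_mem_erase hi)) ?_
  refine prod_dvd_of_isRelPrime (fun j hj j' _ hne => ?_) fun j _ => leafGcd_dvd_left j hi
  exact Nat.coprime_iff_isRelPrime.1 (coprime_leafGcd hi₀ hgcd hj hne (hmin j hj))

theorem exists_leaf_partner (hi₀ : i₀ ∈ A) (hA : 2 ≤ A.card) (ha : ∀ i ∈ A, 0 < a i)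
    (hmin : ∀ j ∈ B, a i₀ ≤ b j) (hgcd : Nat.gcd (A.gcd a) (B.gcd b) = 1)
    (hbig : ∃ j ∈ B, a i₀ < b j) (hsize : a i₀ + (A.card + B.card) ≤ ∑ i ∈ A, a i + 2) :
    ∃ j₀ ∈ B, a i₀ < b j₀ ∧
      ((A.erase i₀).card + B.card - 1) * leafGcd A B a b i₀ j₀ ≤ ∑ i ∈ A.erase i₀, a i := by
  set D := leafGcd A B a b i₀
  have hcardA := card_erase_of_mem hi₀
  have hsumA := sum_erase_add A a hi₀
  by_contra! hcon
  have hD2 : ∀ j ∈ B, a i₀ < b j → 2 ≤ D j := by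
    intro j hj hlt
    have := hcon j hj hlt
    by_contra! hD
    have := Nat.mul_le_mul_left ((A.erase i₀).card + B.card - 1) (by omega : D j ≤ 1)
    omega
  obtain ⟨js, hjs, hlt⟩ := hbig
  have hall := lt_of_two_le_leafGcd hi₀ hmin hgcd hjs hlt (hD2 js hjs hlt)
  have hQ : B.card ≤ ∏ j ∈ B.erase js, D j := by
    have h2pow : 2 ^ (B.erase js).card ≤ ∏ j ∈ B.erase js, D j := pow_card_le_prod _ _ _
      fun j hj => hD2 j (mem_of_mem_erase hj) (hall j (mem_of_mem_erase hj))
    rw [card_erase_of_mem hjs] at h2pow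
    have := (B.card - 1).lt_two_pow_self
    omega
  have hprod := card_sub_one_mul_prod_leafGcd_le hi₀ ha hmin hgcd
  rw [← mul_prod_erase B D hjs, mul_left_comm, mul_comm] at hprod
  have hbad := hcon js hjs hlt
  have hB := card_pos.2 ⟨js, hjs⟩
  have key : (A.erase i₀).card + B.card - 1 ≤ (A.card - 1) * ∏ j ∈ B.erase js, D j := by
    have hmul := Nat.mul_le_mul_left (A.card - 1) hQ
    have : A.card - 1 + B.card ≤ (A.card - 1) * B.card + 1 := by
      have : 1 ≤ A.card - 1 := by omega
      nlinarith
    omega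
  have := Nat.mul_le_mul_right (D js) key
  omega

namespace IsAdmissible

lemma exists_row_leaf_child (h : IsAdmissible A B a b) (hg : Nat.gcd (A.gcd a) (B.gcd b) = 1)
    (hA : 2 ≤ A.card) (hi₀ : i₀ ∈ A) (hminA : ∀ i ∈ A, a i₀ ≤ a i)
    (hminB : ∀ j ∈ B, a i₀ ≤ b j) (hbig : ∃ j ∈ B, a i₀ < b j) :
    ∃ j₀ ∈ B, a i₀ < b j₀ ∧ IsAdmissible (A.erase i₀) B a (update b j₀ (b j₀ - a i₀)) := by
  have hcard : A.card + B.card ≤ ∑ i ∈ A, a i + 1 := by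
    have := h.card_mul_gcd_le
    rw [hg, mul_one] at this
    omega
  obtain ⟨j₀, hj₀, hlt, hbound⟩ := exists_leaf_partner hi₀ hA h.pos_left hminB hg hbig
    (add_card_add_card_le h.nonempty_left h.nonempty_right hminA hminB h.sum_eq hcard)
  refine ⟨j₀, hj₀, hlt, ⟨?_, h.nonempty_right, fun i hi => h.pos_left i (mem_of_mem_erase hi),
    update_sub_pos h.pos_right hlt, ?_, hbound⟩⟩
  · rw [← card_pos, card_erase_of_mem hi₀]
    omega
  · have := sum_erase_add A a hi₀
    have := sum_update_sub_add hj₀ hlt.le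
    have := h.sum_eq
    omega

end IsAdmissible

end Sufficiency

theorem IsAdmissible.exists_isHallTree {A : Finset α} {B : Finset β} {a : α → ℕ} {b : β → ℕ}
    (h : IsAdmissible A B a b) : ∃ E, IsHallTree E A B a b := by
  induction hN : ∑ i ∈ A, a i using Nat.strong_induction_on generalizing A B a b with
  | _ N ih =>
  subst hN
  by_cases hg : Nat.gcd (A.gcd a) (B.gcd b) = 1
  swap
  · have hlt : ∑ i ∈ A, a i / Nat.gcd (A.gcd a) (B.gcd b) < ∑ i ∈ A, a i := by
      rw [← Nat.sum_div gcd_gcd_dvd_left]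
      exact Nat.div_lt_self (sum_pos h.pos_left h.nonempty_left)
        (lt_of_le_of_ne h.gcd_pos (Ne.symm hg))
    obtain ⟨E, hE⟩ := ih _ hlt h.div_gcd rfl
    exact ⟨E, hE.of_div gcd_gcd_dvd_left gcd_gcd_dvd_right⟩
  by_cases hA1 : A.card = 1
  · exact ⟨_, isHallTree_product_of_card_left_eq_one hA1⟩
  by_cases hB1 : B.card = 1
  · exact ⟨_, isHallTree_product_of_card_right_eq_one hB1 h.nonempty_left h.pos_left h.sum_eq⟩
  have hA2 : 2 ≤ A.card := by have := h.nonempty_left.card_pos; omega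
  have hB2 : 2 ≤ B.card := by have := h.nonempty_right.card_pos; omega
  rcases exists_leaf h.nonempty_left h.nonempty_right (h.exists_ne_of_gcd_eq_one hg hA2) with
    ⟨i₀, hi₀, hminA, hminB, hbig⟩ | ⟨j₀, hj₀, hminB, hminA, hbig⟩
  · obtain ⟨j₀, hj₀, hlt, hchild⟩ := h.exists_row_leaf_child hg hA2 hi₀ hminA hminB hbig
    obtain ⟨E, hE⟩ := ih _ (sum_erase_lt_of_pos hi₀ (h.pos_left i₀ hi₀)) hchild rfl
    exact ⟨_, hE.insert_row_leaf hi₀ hj₀ (h.pos_left i₀ hi₀) hlt h.sum_eq⟩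
  · obtain ⟨i₀, hi₀, hlt, hchild⟩ :=
      h.swap.exists_row_leaf_child (by rwa [Nat.gcd_comm]) hB2 hj₀ hminB hminA hbig
    have := sum_update_sub_add hi₀ hlt.le
    have := h.pos_right j₀ hj₀
    obtain ⟨E, hE⟩ := ih _ (by omega) hchild.swap rfl
    exact ⟨_, hE.insert_col_leaf hi₀ hj₀ hlt.le⟩

end HallTree

section Transportation

open Finset

variable {m n : ℕ} (ν : Fin m → ℕ) (μ : Fin n → ℕ)

lemma crpCond_iff_strictHall (htot : (∑ i, ν i) = ∑ j, μ j) (E : Finset (Fin m × Fin n)) :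
    crpCond (fun i => (ν i : ℝ)) (fun j => (μ j : ℝ)) E ↔ HallTree.StrictHall E univ ν μ := by
  have hnbr : ∀ S, nbr E S = HallTree.nbhd E S := fun S => by
    ext j
    simp [nbr]
  simp only [crpCond, HallTree.StrictHall, hnbr, ← Nat.cast_sum, Nat.cast_lt, htot, true_and,
    subset_univ, forall_const]

lemma gcdVec_pos (hm : 1 ≤ m) (hν : ∀ i, 0 < ν i) : 0 < gcdVec ν μ :=
  Nat.gcd_pos_of_pos_left _ <| Nat.pos_of_ne_zero fun h0 =>
    (hν ⟨0, hm⟩).ne' (gcd_eq_zero_iff.1 h0 _ (mem_univ _))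

theorem card_mul_gcdVec_le_of_crpCond (hm : 1 ≤ m) (hν : ∀ i, 0 < ν i) (hμ : ∀ j, 0 < μ j)
    (htot : (∑ i, ν i) = ∑ j, μ j) {E : Finset (Fin m × Fin n)} (hcard : E.card = m + n - 1)
    (hE : crpCond (fun i => (ν i : ℝ)) (fun j => (μ j : ℝ)) E) :
    (m + n - 1) * gcdVec ν μ ≤ ∑ i, ν i := by
  have hg := gcdVec_pos ν μ hm hν
  have hgν : ∀ i ∈ univ, gcdVec ν μ ∣ ν i := HallTree.gcd_gcd_dvd_left
  have hgμ : ∀ j ∈ univ, gcdVec ν μ ∣ μ j := HallTree.gcd_gcd_dvd_right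
  have h : HallTree.HallSurplus E univ univ
      (fun i => ν i / gcdVec ν μ) (fun j => μ j / gcdVec ν μ) 0 :=
    { subset := fun e _ => mem_product.2 ⟨mem_univ _, mem_univ _⟩
      pos_left := fun i hi => Nat.div_pos (Nat.le_of_dvd (hν i) (hgν i hi)) hg
      pos_right := fun j hj => Nat.div_pos (Nat.le_of_dvd (hμ j) (hgμ j hj)) hg
      strictHall := (HallTree.strictHall_div_iff (subset_univ _) hgν hgμ).2
        ((crpCond_iff_strictHall ν μ htot E).1 hE)
      card_le := by simp only [hcard, card_univ, Fintype.card_fin]; omega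
      sum_le := by rw [← Nat.sum_div hgν, ← Nat.sum_div hgμ, htot, add_zero] }
  have := h.card_add_card_add_le
  rw [← Nat.sum_div hgν, card_univ, card_univ, Fintype.card_fin, Fintype.card_fin] at this
  exact (Nat.le_div_iff_mul_le hg).1 (by omega)

theorem exists_crpCond_of_card_mul_gcdVec_le (hm : 1 ≤ m) (hn : 1 ≤ n) (hν : ∀ i, 0 < ν i)
    (hμ : ∀ j, 0 < μ j) (htot : (∑ i, ν i) = ∑ j, μ j)
    (hbound : (m + n - 1) * gcdVec ν μ ≤ ∑ i, ν i) :
    ∃ E : Finset (Fin m × Fin n), E.card = m + n - 1 ∧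
      crpCond (fun i => (ν i : ℝ)) (fun j => (μ j : ℝ)) E := by
  obtain ⟨E, hE⟩ := HallTree.IsAdmissible.exists_isHallTree
    ⟨⟨⟨0, hm⟩, mem_univ _⟩, ⟨⟨0, hn⟩, mem_univ _⟩, fun i _ => hν i, fun j _ => hμ j, htot,
      by simpa [gcdVec] using hbound⟩
  refine ⟨E, ?_, (crpCond_iff_strictHall ν μ htot E).2 hE.strictHall⟩
  have := hE.card_add_one
  simp only [card_univ, Fintype.card_fin] at this
  omega

end Transportation

/-- there exists an edge set with `m + n − 1` edges satisfying the CRP condition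
iff `∑ᵢ νᵢ ≥ (m + n − 1)·gcd(ν,μ)`. -/
theorem stmt_9 {m n : ℕ} (hm : 1 ≤ m) (hn : 1 ≤ n)
    (ν : Fin m → ℕ) (μ : Fin n → ℕ)
    (hν : ∀ i, 0 < ν i) (hμ : ∀ j, 0 < μ j)
    (htot : (∑ i, ν i) = ∑ j, μ j) :
    (∃ E : Finset (Fin m × Fin n), E.card = m + n - 1 ∧
      crpCond (fun i => (ν i : ℝ)) (fun j => (μ j : ℝ)) E) ↔
    (m + n - 1) * gcdVec ν μ ≤ ∑ i, ν i :=
  ⟨fun ⟨_, hcard, hE⟩ => card_mul_gcdVec_le_of_crpCond ν μ hm hν hμ htot hcard hE,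
    exists_crpCond_of_card_mul_gcdVec_le ν μ hm hn hν hμ htot⟩
end

section
/- Let ν ∈ ℝ^m and μ ∈ ℝ^n have all entries strictly positive with ∑_{i∈I} ν_i = ∑_{j∈J} μ_j, and let d ≥ 1. Then there exists E ⊆ I × J such that T_E(ν,μ) is nonempty and the ERP number of T_E(ν,μ) equals d if and only if there exist partitions I = I_1 ⊔ ⋯ ⊔ I_d and J = J_1 ⊔ ⋯ ⊔ J_d into nonempty sets such that ∑_{i∈I_l} ν_i = ∑_{j∈J_l} μ_j for every l ∈ {1,…,d}. -/
open scoped Classical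

/- ===== auxiliary lemmas ===== -/

section Aux

open Finset

variable {m n : ℕ}

lemma aux_adj_iff {F : Finset (Fin m × Fin n)} {i : Fin m} {j : Fin n} :
    (bipartiteGraph F).Adj (Sum.inl i) (Sum.inr j) ↔ (i, j) ∈ F := by
  simp [bipartiteGraph, SimpleGraph.fromRel_adj]

lemma aux_adj_struct {F : Finset (Fin m × Fin n)} {u v : Fin m ⊕ Fin n}
    (h : (bipartiteGraph F).Adj u v) :
    (∃ i j, u = Sum.inl i ∧ v = Sum.inr j ∧ (i, j) ∈ F) ∨
    (∃ i j, v = Sum.inl i ∧ u = Sum.inr j ∧ (i, j) ∈ F) := by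
  rw [bipartiteGraph, SimpleGraph.fromRel_adj] at h
  rcases h.2 with ⟨i, j, h1, h2, h3⟩ | ⟨i, j, h1, h2, h3⟩
  · exact Or.inl ⟨i, j, h1, h2, h3⟩
  · exact Or.inr ⟨i, j, h1, h2, h3⟩

/-- A positive entry of a feasible point lies on a non-redundant edge. -/
lemma aux_mem_diff_redundant {ν : Fin m → ℝ} {μ : Fin n → ℝ} {E : Finset (Fin m × Fin n)}
    {x : Fin m → Fin n → ℝ} (hx : x ∈ transportationPolytope ν μ E)
    {i : Fin m} {j : Fin n} (hpos : 0 < x i j) :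
    (i, j) ∈ E \ redundantEdges ν μ E := by
  have hE : (i, j) ∈ E := by
    by_contra h
    have := hx.2.2.2 i j h
    linarith
  refine Finset.mem_sdiff.mpr ⟨hE, fun hr => ?_⟩
  have := (Finset.mem_filter.mp hr).2 x hx
  simp only at this
  linarith

lemma aux_exists_pos {k : ℕ} {f : Fin k → ℝ} (hnn : ∀ i, 0 ≤ f i) (hpos : 0 < ∑ i, f i) :
    ∃ i, 0 < f i := by
  by_contra h
  push_neg at h
  have : ∑ i, f i ≤ 0 := Finset.sum_nonpos fun i _ => le_antisymm (h i) (hnn i) ▸ le_of_eq rfl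
  linarith

/-- Counting connected components via a surjective "coloring" that is constant on edges and
whose fibers are connected. -/
lemma aux_card_components {V : Type*} (G : SimpleGraph V) {d : ℕ}
    (f : V → Fin d)
    (hadj : ∀ u v, G.Adj u v → f u = f v)
    (hsurj : Function.Surjective f)
    (hconn : ∀ u v, f u = f v → G.Reachable u v) :
    Nat.card G.ConnectedComponent = d := by
  have hwalk : ∀ u v : V, G.Reachable u v → f u = f v := by
    intro u v h
    obtain ⟨p⟩ := h
    induction p with
    | nil => rfl
    | cons h' _ ih => exact (hadj _ _ h').trans ih
  let g : G.ConnectedComponent → Fin d := Quot.lift f hwalk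
  have hg : Function.Bijective g := by
    constructor
    · intro c₁ c₂ hc
      obtain ⟨u, rfl⟩ := Quot.exists_rep c₁
      obtain ⟨v, rfl⟩ := Quot.exists_rep c₂
      exact Quot.sound (hconn u v hc)
    · intro l
      obtain ⟨u, rfl⟩ := hsurj l
      exact ⟨Quot.mk _ u, rfl⟩
  rw [Nat.card_congr (Equiv.ofBijective g hg), Nat.card_eq_fintype_card, Fintype.card_fin]

end Aux

section Main

open Finset

/-- Backward direction: from matching partitions, construct a suitable edge set. -/
lemma aux_backward {m n d : ℕ} (ν : Fin m → ℝ) (μ : Fin n → ℝ)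
    (hν : ∀ i, 0 < ν i) (hμ : ∀ j, 0 < μ j)
    (P : Fin d → Finset (Fin m)) (Q : Fin d → Finset (Fin n))
    (hPne : ∀ l, (P l).Nonempty) (hQne : ∀ l, (Q l).Nonempty)
    (hPd : ∀ l₁ l₂, l₁ ≠ l₂ → Disjoint (P l₁) (P l₂))
    (hQd : ∀ l₁ l₂, l₁ ≠ l₂ → Disjoint (Q l₁) (Q l₂))
    (hPc : Finset.univ.biUnion P = Finset.univ)
    (hQc : Finset.univ.biUnion Q = Finset.univ)
    (hsum : ∀ l, (∑ i ∈ P l, ν i) = ∑ j ∈ Q l, μ j) :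
    ∃ E : Finset (Fin m × Fin n),
      (transportationPolytope ν μ E).Nonempty ∧ erpNumber ν μ E = d := by
  classical
  -- block functions
  have hbI' : ∀ i : Fin m, ∃ l, i ∈ P l := by
    intro i
    have : i ∈ Finset.univ.biUnion P := by rw [hPc]; exact Finset.mem_univ i
    obtain ⟨l, _, hl⟩ := Finset.mem_biUnion.mp this
    exact ⟨l, hl⟩
  choose bI hbI using hbI'
  have hbJ' : ∀ j : Fin n, ∃ l, j ∈ Q l := by
    intro j
    have : j ∈ Finset.univ.biUnion Q := by rw [hQc]; exact Finset.mem_univ j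
    obtain ⟨l, _, hl⟩ := Finset.mem_biUnion.mp this
    exact ⟨l, hl⟩
  choose bJ hbJ using hbJ'
  have hbIu : ∀ i l, i ∈ P l → bI i = l := by
    intro i l h
    by_contra hne
    exact Finset.disjoint_left.mp (hPd _ _ hne) (hbI i) h
  have hbJu : ∀ j l, j ∈ Q l → bJ j = l := by
    intro j l h
    by_contra hne
    exact Finset.disjoint_left.mp (hQd _ _ hne) (hbJ j) h
  have hPmem : ∀ (i : Fin m) l, i ∈ P l ↔ bI i = l :=
    fun i l => ⟨hbIu i l, fun h => h ▸ hbI i⟩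
  have hQmem : ∀ (j : Fin n) l, j ∈ Q l ↔ bJ j = l :=
    fun j l => ⟨hbJu j l, fun h => h ▸ hbJ j⟩
  set S : Fin d → ℝ := fun l => ∑ i ∈ P l, ν i with hSdef
  have hSpos : ∀ l, 0 < S l := fun l => Finset.sum_pos (fun i _ => hν i) (hPne l)
  set E : Finset (Fin m × Fin n) :=
    Finset.univ.filter (fun e => bI e.1 = bJ e.2) with hEdef
  have hEmem : ∀ (i : Fin m) (j : Fin n), (i, j) ∈ E ↔ bI i = bJ j := by
    intro i j
    simp [hEdef]
  set x : Fin m → Fin n → ℝ :=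
    fun i j => if bI i = bJ j then ν i * μ j / S (bI i) else 0 with hxdef
  have hxval : ∀ (i : Fin m) (j : Fin n),
      x i j = if j ∈ Q (bI i) then ν i * μ j / S (bI i) else 0 := by
    intro i j
    simp only [hxdef]
    by_cases h : bI i = bJ j
    · rw [if_pos h, if_pos ((hQmem j (bI i)).mpr h.symm)]
    · rw [if_neg h, if_neg (fun hc => h ((hQmem j (bI i)).mp hc).symm)]
  have hxval' : ∀ (i : Fin m) (j : Fin n),
      x i j = if i ∈ P (bJ j) then ν i * μ j / S (bJ j) else 0 := by
    intro i j
    simp only [hxdef]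
    by_cases h : bI i = bJ j
    · rw [if_pos h, if_pos ((hPmem i (bJ j)).mpr h), h]
    · rw [if_neg h, if_neg (fun hc => h ((hPmem i (bJ j)).mp hc))]
  have hxnn : ∀ i j, 0 ≤ x i j := by
    intro i j
    rw [hxval i j]
    split
    · have h1 := hSpos (bI i)
      have h2 := (hν i).le
      have h3 := (hμ j).le
      positivity
    · exact le_rfl
  have hxpos : ∀ i j, bI i = bJ j → 0 < x i j := by
    intro i j h
    simp only [hxdef]
    rw [if_pos h]
    have := hSpos (bI i)
    have := hν i
    have := hμ j
    positivity
  have hQsum : ∀ l, ∑ j ∈ Q l, μ j = S l := fun l => (hsum l).symm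
  have hxfeas : x ∈ transportationPolytope ν μ E := by
    refine ⟨hxnn, ?_, ?_, ?_⟩
    · intro i
      calc ∑ j, x i j
          = ∑ j, (if j ∈ Q (bI i) then ν i * μ j / S (bI i) else 0) :=
            Finset.sum_congr rfl fun j _ => hxval i j
        _ = ∑ j ∈ Q (bI i), ν i * μ j / S (bI i) := by
            rw [Finset.sum_ite_mem, Finset.univ_inter]
        _ = (ν i / S (bI i)) * ∑ j ∈ Q (bI i), μ j := by
            rw [Finset.mul_sum]
            exact Finset.sum_congr rfl fun j _ => by ring
        _ = ν i := by
            rw [hQsum, div_mul_cancel₀]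
            exact (hSpos (bI i)).ne'
    · intro j
      calc ∑ i, x i j
          = ∑ i, (if i ∈ P (bJ j) then ν i * μ j / S (bJ j) else 0) :=
            Finset.sum_congr rfl fun i _ => hxval' i j
        _ = ∑ i ∈ P (bJ j), ν i * μ j / S (bJ j) := by
            rw [Finset.sum_ite_mem, Finset.univ_inter]
        _ = (μ j / S (bJ j)) * ∑ i ∈ P (bJ j), ν i := by
            rw [Finset.mul_sum]
            exact Finset.sum_congr rfl fun i _ => by ring
        _ = μ j := by
            rw [show ∑ i ∈ P (bJ j), ν i = S (bJ j) from rfl, div_mul_cancel₀]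
            exact (hSpos (bJ j)).ne'
    · intro i j hij
      simp only [hxdef]
      rw [if_neg (fun h => hij ((hEmem i j).mpr h))]
  have hred : redundantEdges ν μ E = ∅ := by
    rw [Finset.eq_empty_iff_forall_notMem]
    intro e he
    obtain ⟨heE, h0⟩ := Finset.mem_filter.mp he
    have h1 := h0 x hxfeas
    have h2 : 0 < x e.1 e.2 := hxpos e.1 e.2 ((hEmem e.1 e.2).mp heE)
    linarith
  refine ⟨E, ⟨x, hxfeas⟩, ?_⟩
  rw [erpNumber, hred, Finset.sdiff_empty, numComponents]
  have hadjE : ∀ (i : Fin m) (j : Fin n), bI i = bJ j →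
      (bipartiteGraph E).Adj (Sum.inl i) (Sum.inr j) :=
    fun i j h => aux_adj_iff.mpr ((hEmem i j).mpr h)
  apply aux_card_components (bipartiteGraph E) (Sum.elim bI bJ)
  · intro u v h
    rcases aux_adj_struct h with ⟨i, j, rfl, rfl, hij⟩ | ⟨i, j, rfl, rfl, hij⟩
    · exact (hEmem i j).mp hij
    · exact ((hEmem i j).mp hij).symm
  · intro l
    obtain ⟨i, hi⟩ := hPne l
    exact ⟨Sum.inl i, hbIu i l hi⟩
  · intro u v huv
    have step : ∀ w, Sum.elim bI bJ w = Sum.elim bI bJ u →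
        (bipartiteGraph E).Reachable w u := by
      have hmain : ∀ w, Sum.elim bI bJ w = Sum.elim bI bJ u →
          ∃ j0 : Fin n, bJ j0 = Sum.elim bI bJ u ∧
            (bipartiteGraph E).Reachable w (Sum.inr j0) := by
        obtain ⟨j0, hj0⟩ := hQne (Sum.elim bI bJ u)
        have hj0' : bJ j0 = Sum.elim bI bJ u := hbJu _ _ hj0
        intro w hw
        refine ⟨j0, hj0', ?_⟩
        cases w with
        | inl i =>
            exact (hadjE i j0 (by rw [hj0']; exact hw)).reachable
        | inr j =>
            obtain ⟨i0, hi0⟩ := hPne (Sum.elim bI bJ u)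
            have hi0' : bI i0 = Sum.elim bI bJ u := hbIu _ _ hi0
            have h1 := (hadjE i0 j (by rw [hi0']; exact hw.symm)).reachable
            exact h1.symm.trans (hadjE i0 j0 (by rw [hi0', hj0'])).reachable
      intro w hw
      obtain ⟨j0, hj0, hr⟩ := hmain w hw
      obtain ⟨j1, hj1, hr'⟩ := hmain u rfl
      -- both reach Sum.inr j0 / j1; connect j0 j1 via some i
      obtain ⟨i0, hi0⟩ := hPne (Sum.elim bI bJ u)
      have hi0' : bI i0 = Sum.elim bI bJ u := hbIu _ _ hi0
      have h01 := (hadjE i0 j0 (by rw [hi0', hj0])).reachable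
      have h02 := (hadjE i0 j1 (by rw [hi0', hj1])).reachable
      exact hr.trans (h01.symm.trans h02) |>.trans hr'.symm
    exact (step v huv.symm).symm

/-- Forward direction: from an edge set with ERP number `d`, extract partitions. -/
lemma aux_forward {m n d : ℕ} (ν : Fin m → ℝ) (μ : Fin n → ℝ)
    (hν : ∀ i, 0 < ν i) (hμ : ∀ j, 0 < μ j)
    (E : Finset (Fin m × Fin n)) (hne : (transportationPolytope ν μ E).Nonempty)
    (herp : erpNumber ν μ E = d) :
    ∃ (P : Fin d → Finset (Fin m)) (Q : Fin d → Finset (Fin n)),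
      (∀ l, (P l).Nonempty) ∧ (∀ l, (Q l).Nonempty) ∧
      (∀ l₁ l₂, l₁ ≠ l₂ → Disjoint (P l₁) (P l₂)) ∧
      (∀ l₁ l₂, l₁ ≠ l₂ → Disjoint (Q l₁) (Q l₂)) ∧
      Finset.univ.biUnion P = Finset.univ ∧
      Finset.univ.biUnion Q = Finset.univ ∧
      ∀ l, (∑ i ∈ P l, ν i) = ∑ j ∈ Q l, μ j := by
  classical
  obtain ⟨x, hx⟩ := hne
  set F : Finset (Fin m × Fin n) := E \ redundantEdges ν μ E with hFdef
  set G : SimpleGraph (Fin m ⊕ Fin n) := bipartiteGraph F with hGdef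
  have hcard : Nat.card G.ConnectedComponent = d := herp
  let e : G.ConnectedComponent ≃ Fin d := Finite.equivFinOfCardEq hcard
  set P : Fin d → Finset (Fin m) :=
    fun l => Finset.univ.filter fun i => e (G.connectedComponentMk (Sum.inl i)) = l with hPdef
  set Q : Fin d → Finset (Fin n) :=
    fun l => Finset.univ.filter fun j => e (G.connectedComponentMk (Sum.inr j)) = l with hQdef
  have hPm : ∀ (i : Fin m) l, i ∈ P l ↔ e (G.connectedComponentMk (Sum.inl i)) = l := by
    intro i l; simp [hPdef]
  have hQm : ∀ (j : Fin n) l, j ∈ Q l ↔ e (G.connectedComponentMk (Sum.inr j)) = l := by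
    intro j l; simp [hQdef]
  have hsupp : ∀ {i j}, 0 < x i j → (i, j) ∈ F := fun h => aux_mem_diff_redundant hx h
  have hmk : ∀ {i j}, 0 < x i j →
      G.connectedComponentMk (Sum.inl i) = G.connectedComponentMk (Sum.inr j) :=
    fun h => SimpleGraph.ConnectedComponent.sound (aux_adj_iff.mpr (hsupp h)).reachable
  have hrowpos : ∀ i : Fin m, ∃ j, 0 < x i j := by
    intro i
    apply aux_exists_pos (fun j => hx.1 i j)
    rw [hx.2.1 i]; exact hν i
  have hcolpos : ∀ j : Fin n, ∃ i, 0 < x i j := by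
    intro j
    apply aux_exists_pos (fun i => hx.1 i j)
    rw [hx.2.2.1 j]; exact hμ j
  have hPQ : ∀ l (i : Fin m) (j : Fin n), 0 < x i j → (i ∈ P l ↔ j ∈ Q l) := by
    intro l i j h
    rw [hPm, hQm, hmk h]
  refine ⟨P, Q, ?_, ?_, ?_, ?_, ?_, ?_, ?_⟩
  · -- P l nonempty
    intro l
    obtain ⟨v, hv⟩ := (e.symm l).exists_rep
    cases v with
    | inl i =>
        have hv' : G.connectedComponentMk (Sum.inl i) = e.symm l := hv
        exact ⟨i, (hPm i l).mpr (by rw [hv', Equiv.apply_symm_apply])⟩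
    | inr j =>
        have hv' : G.connectedComponentMk (Sum.inr j) = e.symm l := hv
        obtain ⟨i, hi⟩ := hcolpos j
        refine ⟨i, (hPm i l).mpr ?_⟩
        rw [hmk hi, hv', Equiv.apply_symm_apply]
  · -- Q l nonempty
    intro l
    obtain ⟨v, hv⟩ := (e.symm l).exists_rep
    cases v with
    | inl i =>
        have hv' : G.connectedComponentMk (Sum.inl i) = e.symm l := hv
        obtain ⟨j, hj⟩ := hrowpos i
        refine ⟨j, (hQm j l).mpr ?_⟩
        rw [← hmk hj, hv', Equiv.apply_symm_apply]
    | inr j =>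
        have hv' : G.connectedComponentMk (Sum.inr j) = e.symm l := hv
        exact ⟨j, (hQm j l).mpr (by rw [hv', Equiv.apply_symm_apply])⟩
  · intro l₁ l₂ hne'
    rw [Finset.disjoint_left]
    intro i h1 h2
    exact hne' (((hPm i l₁).mp h1).symm.trans ((hPm i l₂).mp h2))
  · intro l₁ l₂ hne'
    rw [Finset.disjoint_left]
    intro j h1 h2
    exact hne' (((hQm j l₁).mp h1).symm.trans ((hQm j l₂).mp h2))
  · apply Finset.eq_univ_iff_forall.mpr
    intro i
    exact Finset.mem_biUnion.mpr ⟨_, Finset.mem_univ _, (hPm i _).mpr rfl⟩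
  · apply Finset.eq_univ_iff_forall.mpr
    intro j
    exact Finset.mem_biUnion.mpr ⟨_, Finset.mem_univ _, (hQm j _).mpr rfl⟩
  · intro l
    calc ∑ i ∈ P l, ν i
        = ∑ i ∈ P l, ∑ j, x i j := Finset.sum_congr rfl fun i _ => (hx.2.1 i).symm
      _ = ∑ i ∈ P l, ∑ j ∈ Q l, x i j := by
          refine Finset.sum_congr rfl fun i hi => ?_
          symm
          apply Finset.sum_subset (Finset.subset_univ _)
          intro j _ hj
          by_contra h0
          have hp : 0 < x i j := lt_of_le_of_ne (hx.1 i j) (Ne.symm h0)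
          exact hj ((hPQ l i j hp).mp hi)
      _ = ∑ j ∈ Q l, ∑ i ∈ P l, x i j := Finset.sum_comm
      _ = ∑ j ∈ Q l, ∑ i, x i j := by
          refine Finset.sum_congr rfl fun j hj => ?_
          apply Finset.sum_subset (Finset.subset_univ _)
          intro i _ hi
          by_contra h0
          have hp : 0 < x i j := lt_of_le_of_ne (hx.1 i j) (Ne.symm h0)
          exact hi ((hPQ l i j hp).mpr hj)
      _ = ∑ j ∈ Q l, μ j := Finset.sum_congr rfl fun j _ => hx.2.2.1 j

end Main


/-- there exists `E` with nonempty `T_E(ν,μ)` and ERP number `d` iff there are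
partitions of `I` and `J` into `d` nonempty blocks with matching block sums. -/
theorem stmt_10 {m n : ℕ} (hm : 1 ≤ m) (hn : 1 ≤ n)
    (ν : Fin m → ℝ) (μ : Fin n → ℝ)
    (hν : ∀ i, 0 < ν i) (hμ : ∀ j, 0 < μ j)
    (htot : (∑ i, ν i) = ∑ j, μ j)
    (d : ℕ) (hd : 1 ≤ d) :
    (∃ E : Finset (Fin m × Fin n),
      (transportationPolytope ν μ E).Nonempty ∧ erpNumber ν μ E = d) ↔
    (∃ (P : Fin d → Finset (Fin m)) (Q : Fin d → Finset (Fin n)),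
      (∀ l, (P l).Nonempty) ∧ (∀ l, (Q l).Nonempty) ∧
      (∀ l₁ l₂, l₁ ≠ l₂ → Disjoint (P l₁) (P l₂)) ∧
      (∀ l₁ l₂, l₁ ≠ l₂ → Disjoint (Q l₁) (Q l₂)) ∧
      Finset.univ.biUnion P = Finset.univ ∧
      Finset.univ.biUnion Q = Finset.univ ∧
      ∀ l, (∑ i ∈ P l, ν i) = ∑ j ∈ Q l, μ j) := by
  constructor
  · rintro ⟨E, h1, h2⟩
    exact aux_forward ν μ hν hμ E h1 h2
  · rintro ⟨P, Q, h1, h2, h3, h4, h5, h6, h7⟩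
    exact aux_backward ν μ hν hμ P Q h1 h2 h3 h4 h5 h6 h7
end

section
/- Suppose ν ∈ ℝ^m and μ ∈ ℝ^n have all entries strictly positive, T_E(ν,μ) is nonempty, and there exists C ⊆ I with ∑_{j∈N_{E∖E_r}(C)} μ_j > ∑_{i∈C} ν_i; let δ = δ_E(ν,μ) be the CRP-gap. Then for every ν̂ ∈ ℝ_{≥0}^m such that T_E(ν̂,μ) is nonempty and ∑_{i∈I} |ν̂_i − ν_i| < 2δ, the ERP number of T_E(ν̂,μ) is at most the ERP number of T_E(ν,μ). -/
/-!
Write `F = E ∖ E_r(ν)` and `F' = E ∖ E_r(ν')`. Every component of `G(F')` contains a demand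
node and every supply node has an `F`-neighbour, so it suffices that two demands `a, a'` sharing a
supply in `F` are connected in `G(F')`. Let `W` be the set of demands reachable from `a` by steps
`c ⟶ c'`, where `c'` serves along `F'` a supply adjacent to `c` in `E`. No `ν'`-flow enters
`N_E(W)` from outside `W`, so `W` is binding for `ν'`; as the perturbation is smaller than `2δ`,
`W` is then binding for `ν` on `N_F(W)`, which forces `a' ∈ W`. So `a` and `a'` reach each other
by steps, and a cycle of steps uses no `ν'`-redundant edge: pushing a `ν'`-flow that is positive
on all of `F'` around the cycle would put flow on it.
-/

open scoped Classical

open Finset Relation SimpleGraph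

theorem SimpleGraph.card_le_card_connectedComponent_of_surjective {V β : Type*} [Finite V]
    {G : SimpleGraph V} (f : V → β) (hf : ∀ u v, G.Adj u v → f u = f v)
    (hsurj : Function.Surjective f) : Nat.card β ≤ Nat.card G.ConnectedComponent := by
  have hreach : ∀ u v, G.Reachable u v → f u = f v := by
    intro u v h
    rw [G.reachable_iff_reflTransGen] at h
    induction h with
    | refl => rfl
    | tail _ hadj ih => exact ih.trans (hf _ _ hadj)
  refine Nat.card_le_card_of_surjective (Quot.lift f hreach) fun b => ?_
  obtain ⟨v, rfl⟩ := hsurj b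
  exact ⟨G.connectedComponentMk v, rfl⟩

theorem two_mul_sum_le_sum_abs {ι : Type*} [Fintype ι] [DecidableEq ι] {f : ι → ℝ}
    (hf : ∑ i, f i = 0) (S : Finset ι) : 2 * ∑ i ∈ S, f i ≤ ∑ i, |f i| := by
  have hcompl : ∑ i ∈ S, f i = -∑ i ∈ Sᶜ, f i := by
    rw [eq_neg_iff_add_eq_zero, sum_add_sum_compl, hf]
  have hS : ∑ i ∈ S, f i ≤ ∑ i ∈ S, |f i| := sum_le_sum fun i _ => le_abs_self _
  have hSc : -∑ i ∈ Sᶜ, f i ≤ ∑ i ∈ Sᶜ, |f i| := by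
    rw [← sum_neg_distrib]; exact sum_le_sum fun i _ => neg_le_abs _
  linarith [sum_add_sum_compl S fun i => |f i|]

section Bipartite

variable {m n : ℕ} {F : Finset (Fin m × Fin n)}

@[simp]
theorem bipartiteGraph_adj_inl_inr {i : Fin m} {j : Fin n} :
    (bipartiteGraph F).Adj (.inl i) (.inr j) ↔ (i, j) ∈ F := by
  simp [bipartiteGraph]

@[simp]
theorem bipartiteGraph_adj_inr_inl {i : Fin m} {j : Fin n} :
    (bipartiteGraph F).Adj (.inr j) (.inl i) ↔ (i, j) ∈ F := by
  simp [bipartiteGraph]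

@[simp]
theorem bipartiteGraph_not_adj_inl_inl {i i' : Fin m} :
    ¬(bipartiteGraph F).Adj (.inl i) (.inl i') := by
  simp [bipartiteGraph]

@[simp]
theorem bipartiteGraph_not_adj_inr_inr {j j' : Fin n} :
    ¬(bipartiteGraph F).Adj (.inr j) (.inr j') := by
  simp [bipartiteGraph]

theorem mem_nbr {S : Finset (Fin m)} {j : Fin n} : j ∈ nbr F S ↔ ∃ i ∈ S, (i, j) ∈ F := by
  simp [nbr]

end Bipartite

section Flows

variable {m n : ℕ} {ρ : Fin m → ℝ} {μ : Fin n → ℝ} {E F : Finset (Fin m × Fin n)}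
  {x : Fin m → Fin n → ℝ}

theorem mem_sdiff_redundantEdges {i : Fin m} {j : Fin n} :
    (i, j) ∈ E \ redundantEdges ρ μ E ↔
      (i, j) ∈ E ∧ ∃ x ∈ transportationPolytope ρ μ E, x i j ≠ 0 := by
  simp only [redundantEdges, mem_sdiff, mem_filter, not_and, not_forall, exists_prop]
  tauto

theorem mem_of_ne_zero (hx : x ∈ transportationPolytope ρ μ E)
    {i : Fin m} {j : Fin n} (h : x i j ≠ 0) : (i, j) ∈ E :=
  not_imp_comm.1 (hx.2.2.2 i j) h

theorem mem_sdiff_redundantEdges_of_ne_zero (hx : x ∈ transportationPolytope ρ μ E)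
    {i : Fin m} {j : Fin n} (h : x i j ≠ 0) : (i, j) ∈ E \ redundantEdges ρ μ E :=
  mem_sdiff_redundantEdges.2 ⟨mem_of_ne_zero hx h, x, hx, h⟩

theorem exists_mem_sdiff_redundantEdges (hx : x ∈ transportationPolytope ρ μ E) {j : Fin n}
    (hj : 0 < μ j) : ∃ i, (i, j) ∈ E \ redundantEdges ρ μ E := by
  obtain ⟨i, -, hi⟩ := exists_ne_zero_of_sum_ne_zero ((hx.2.2.1 j).symm ▸ hj.ne')
  exact ⟨i, mem_sdiff_redundantEdges_of_ne_zero hx hi⟩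

theorem sum_eq_sum_of_mem_transportationPolytope (hx : x ∈ transportationPolytope ρ μ E) :
    ∑ i, ρ i = ∑ j, μ j := by
  simp only [← hx.2.1, ← hx.2.2.1]
  exact sum_comm

theorem sum_nbr_eq_add_sum_compl (hx : x ∈ transportationPolytope ρ μ E)
    (hF : ∀ i j, x i j ≠ 0 → (i, j) ∈ F) (S : Finset (Fin m)) :
    ∑ j ∈ nbr F S, μ j = ∑ i ∈ S, ρ i + ∑ j ∈ nbr F S, ∑ i ∈ Sᶜ, x i j := by
  have hrow : ∀ i ∈ S, ∑ j ∈ nbr F S, x i j = ρ i := fun i hi => by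
    rw [← hx.2.1 i]
    refine sum_subset (subset_univ _) fun j _ hj => ?_
    by_contra h
    exact hj (mem_nbr.2 ⟨i, hi, hF i j h⟩)
  calc ∑ j ∈ nbr F S, μ j
      = ∑ j ∈ nbr F S, (∑ i ∈ S, x i j + ∑ i ∈ Sᶜ, x i j) := by
        simp only [sum_add_sum_compl, hx.2.2.1]
    _ = ∑ i ∈ S, ρ i + ∑ j ∈ nbr F S, ∑ i ∈ Sᶜ, x i j := by
        rw [sum_add_distrib, sum_comm, sum_congr rfl hrow]

theorem sum_le_sum_nbr (hx : x ∈ transportationPolytope ρ μ E)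
    (hF : ∀ i j, x i j ≠ 0 → (i, j) ∈ F) (S : Finset (Fin m)) :
    ∑ i ∈ S, ρ i ≤ ∑ j ∈ nbr F S, μ j := by
  rw [sum_nbr_eq_add_sum_compl hx hF S, le_add_iff_nonneg_right]
  exact sum_nonneg fun j _ => sum_nonneg fun i _ => hx.1 i j

theorem sum_nbr_eq_iff (hx : x ∈ transportationPolytope ρ μ E)
    (hF : ∀ i j, x i j ≠ 0 → (i, j) ∈ F) (S : Finset (Fin m)) :
    ∑ j ∈ nbr F S, μ j = ∑ i ∈ S, ρ i ↔ ∀ i ∉ S, ∀ j ∈ nbr F S, x i j = 0 := by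
  rw [sum_nbr_eq_add_sum_compl hx hF S, add_eq_left,
    sum_eq_zero_iff_of_nonneg fun j _ => sum_nonneg fun i _ => hx.1 i j]
  simp only [sum_eq_zero_iff_of_nonneg fun i _ => hx.1 i _, mem_compl]
  tauto

theorem convex_transportationPolytope : Convex ℝ (transportationPolytope ρ μ E) := by
  rintro x ⟨hx0, hxr, hxc, hxE⟩ y ⟨hy0, hyr, hyc, hyE⟩ a b ha hb hab
  refine ⟨fun i j => ?_, fun i => ?_, fun j => ?_, fun i j hij => ?_⟩
  · simp only [Pi.add_apply, Pi.smul_apply, smul_eq_mul]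
    have := hx0 i j; have := hy0 i j; positivity
  · simp [sum_add_distrib, ← mul_sum, hxr, hyr, ← add_mul, hab]
  · simp [sum_add_distrib, ← mul_sum, hxc, hyc, ← add_mul, hab]
  · simp [hxE i j hij, hyE i j hij]

theorem exists_pos_of_subset_sdiff_redundantEdges
    (hne : (transportationPolytope ρ μ E).Nonempty) {A : Finset (Fin m × Fin n)}
    (hA : A ⊆ E \ redundantEdges ρ μ E) :
    ∃ z ∈ transportationPolytope ρ μ E, ∀ e ∈ A, 0 < z e.1 e.2 := by
  induction A using Finset.induction_on with
  | empty => exact hne.imp fun z hz => ⟨hz, by simp⟩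
  | insert e A _ ih =>
    obtain ⟨z, hz, hzA⟩ := ih ((subset_insert e A).trans hA)
    obtain ⟨-, w, hw, hwe⟩ := mem_sdiff_redundantEdges.1 (hA (mem_insert_self e A))
    refine ⟨(1 / 2 : ℝ) • z + (1 / 2 : ℝ) • w,
      convex_transportationPolytope hz hw (by norm_num) (by norm_num) (by norm_num), ?_⟩
    simp only [mem_insert, forall_eq_or_imp, Pi.add_apply, Pi.smul_apply, smul_eq_mul]
    refine ⟨?_, fun e' he' => ?_⟩
    · have := (hw.1 e.1 e.2).lt_of_ne' hwe; have := hz.1 e.1 e.2; positivity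
    · have := hzA e' he'; have := hw.1 e'.1 e'.2; positivity

theorem exists_add_smul_mem_transportationPolytope {z d : Fin m → Fin n → ℝ}
    (hz : z ∈ transportationPolytope ρ μ E) (hcol : ∀ j, ∑ i, d i j = 0)
    (hrow : ∀ i, ∑ j, d i j = 0) (hdE : ∀ i j, (i, j) ∉ E → d i j = 0)
    (hneg : ∀ i j, d i j < 0 → 0 < z i j) :
    ∃ ε : ℝ, 0 < ε ∧ z + ε • d ∈ transportationPolytope ρ μ E := by
  have hsmall : ∀ᶠ ε in nhdsWithin (0 : ℝ) (Set.Ioi 0),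
      0 < ε ∧ ∀ i j, 0 < z i j → 0 < z i j + ε * d i j := by
    refine eventually_mem_nhdsWithin.and (nhdsWithin_le_nhds ?_)
    refine Filter.eventually_all.2 fun i => Filter.eventually_all.2 fun j => ?_
    by_cases hij : 0 < z i j
    · have hcont : Continuous fun ε : ℝ => z i j + ε * d i j := by fun_prop
      exact ((hcont.tendsto 0).eventually_const_lt (by simpa using hij)).mono fun _ h _ => h
    · exact Filter.Eventually.of_forall fun _ h => absurd h hij
  obtain ⟨ε, hε, hpos⟩ := hsmall.exists
  refine ⟨ε, hε, fun i j => ?_, fun i => ?_, fun j => ?_, fun i j hij => ?_⟩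
  · simp only [Pi.add_apply, Pi.smul_apply, smul_eq_mul]
    rcases (hz.1 i j).lt_or_eq with h | h
    · exact (hpos i j h).le
    · have : 0 ≤ d i j := not_lt.1 fun hd => (hneg i j hd).ne' h.symm
      rw [← h]; positivity
  · simp [sum_add_distrib, ← mul_sum, hz.2.1, hrow]
  · simp [sum_add_distrib, ← mul_sum, hz.2.2.1, hcol]
  · simp [hz.2.2.2 i j hij, hdE i j hij]

theorem mem_sdiff_redundantEdges_of_pos {z d : Fin m → Fin n → ℝ}
    (hz : z ∈ transportationPolytope ρ μ E) (hcol : ∀ j, ∑ i, d i j = 0)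
    (hrow : ∀ i, ∑ j, d i j = 0) (hdE : ∀ i j, (i, j) ∉ E → d i j = 0)
    (hneg : ∀ i j, d i j < 0 → 0 < z i j) {i : Fin m} {j : Fin n} (hd : 0 < d i j) :
    (i, j) ∈ E \ redundantEdges ρ μ E := by
  obtain ⟨ε, hε, hmem⟩ := exists_add_smul_mem_transportationPolytope hz hcol hrow hdE hneg
  refine mem_sdiff_redundantEdges_of_ne_zero hmem (ne_of_gt ?_)
  simp only [Pi.add_apply, Pi.smul_apply, smul_eq_mul]
  have := hz.1 i j; positivity

end Flows

section Shift

variable {m n : ℕ} {E F : Finset (Fin m × Fin n)}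

def DemandStep (E F : Finset (Fin m × Fin n)) (c c' : Fin m) : Prop :=
  ∃ e, (c, e) ∈ E ∧ (c', e) ∈ F

def IsShift (E F : Finset (Fin m × Fin n)) (d : Fin m → Fin n → ℝ) (u w : Fin m) : Prop :=
  (∀ j, ∑ i, d i j = 0) ∧
  (∀ i, ∑ j, d i j = (if i = u then 1 else 0) - if i = w then 1 else 0) ∧
  (∀ i j, (i, j) ∉ E → d i j = 0) ∧ ∀ i j, (i, j) ∉ F → 0 ≤ d i j

theorem isShift_zero (u : Fin m) : IsShift E F 0 u u := by
  refine ⟨?_, ?_, ?_, ?_⟩ <;> simp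

theorem IsShift.add {d d' : Fin m → Fin n → ℝ} {u v w : Fin m} (h : IsShift E F d u v)
    (h' : IsShift E F d' v w) : IsShift E F (d + d') u w := by
  obtain ⟨hcol, hrow, hE, hF⟩ := h
  obtain ⟨hcol', hrow', hE', hF'⟩ := h'
  refine ⟨fun j => ?_, fun i => ?_, fun i j hij => ?_, fun i j hij => ?_⟩
  · simp [sum_add_distrib, hcol, hcol']
  · simp only [Pi.add_apply, sum_add_distrib, hrow, hrow']
    ring
  · simp [hE i j hij, hE' i j hij]
  · exact add_nonneg (hF i j hij) (hF' i j hij)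

def stepShift (u w : Fin m) (e : Fin n) : Fin m → Fin n → ℝ :=
  fun i j => if j = e then (if i = u then 1 else 0) - if i = w then 1 else 0 else 0

theorem isShift_stepShift (hFE : F ⊆ E) {u w : Fin m} {e : Fin n} (hue : (u, e) ∈ E)
    (hwe : (w, e) ∈ F) : IsShift E F (stepShift u w e) u w := by
  refine ⟨fun j => ?_, fun i => ?_, fun i j hij => ?_, fun i j hij => ?_⟩
  · by_cases hj : j = e <;> simp [stepShift, hj, sum_sub_distrib]
  · simp [stepShift]
  · have hu : ¬(i = u ∧ j = e) := by rintro ⟨rfl, rfl⟩; exact hij hue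
    have hw : ¬(i = w ∧ j = e) := by rintro ⟨rfl, rfl⟩; exact hij (hFE hwe)
    simp only [stepShift]
    split_ifs <;> simp_all
  · have hw : ¬(i = w ∧ j = e) := by rintro ⟨rfl, rfl⟩; exact hij hwe
    simp only [stepShift]
    split_ifs <;> simp_all

theorem exists_isShift_of_reflTransGen (hFE : F ⊆ E) {u w : Fin m}
    (h : ReflTransGen (DemandStep E F) u w) :
    ∃ d : Fin m → Fin n → ℝ, IsShift E F d u w := by
  induction h with
  | refl => exact ⟨0, isShift_zero u⟩
  | tail _ hstep ih =>
    obtain ⟨d, hd⟩ := ih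
    obtain ⟨e, hve, hwe⟩ := hstep
    exact ⟨_, hd.add (isShift_stepShift hFE hve hwe)⟩

end Shift

section Cycles

variable {m n : ℕ} {ρ : Fin m → ℝ} {μ : Fin n → ℝ} {E : Finset (Fin m × Fin n)}

/-- Closing a step `c ⟶ c'` by a path back from `c'` gives a circulation that is positive on
`(c, e)`; pushing a full-support flow along it makes `(c, e)` carry flow. -/
theorem mem_sdiff_redundantEdges_of_reflTransGen (hne : (transportationPolytope ρ μ E).Nonempty)
    {c c' : Fin m} {e : Fin n} (hce : (c, e) ∈ E) (hc'e : (c', e) ∈ E \ redundantEdges ρ μ E)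
    (hback : ReflTransGen (DemandStep E (E \ redundantEdges ρ μ E)) c' c) :
    (c, e) ∈ E \ redundantEdges ρ μ E := by
  by_contra hce'
  obtain ⟨z, hz, hzpos⟩ := exists_pos_of_subset_sdiff_redundantEdges hne subset_rfl
  obtain ⟨d', hd'⟩ := exists_isShift_of_reflTransGen sdiff_subset hback
  obtain ⟨hcol, hrow, hdE, hdF⟩ := (isShift_stepShift sdiff_subset hce hc'e).add hd'
  have hcc' : c ≠ c' := by rintro rfl; exact hce' hc'e
  refine hce' (mem_sdiff_redundantEdges_of_pos hz hcol (by simpa using hrow) hdE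
    (fun i j hd => ?_) ?_)
  · by_contra hz0
    exact hd.not_ge (hdF i j fun hij => hz0 (hzpos (i, j) hij))
  · have := hd'.2.2.2 c e hce'
    simp [stepShift, hcc']
    linarith

theorem reachable_of_reflTransGen_of_reflTransGen
    (hne : (transportationPolytope ρ μ E).Nonempty) {a a' : Fin m}
    (h : ReflTransGen (DemandStep E (E \ redundantEdges ρ μ E)) a a')
    (h' : ReflTransGen (DemandStep E (E \ redundantEdges ρ μ E)) a' a) :
    (bipartiteGraph (E \ redundantEdges ρ μ E)).Reachable (.inl a) (.inl a') := by
  revert h'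
  induction h using ReflTransGen.head_induction_on with
  | refl => exact fun _ => .rfl
  | @head b c hstep hrest ih =>
    intro hback
    obtain ⟨e, hbe, hce⟩ := hstep
    have hbe' := mem_sdiff_redundantEdges_of_reflTransGen hne hbe hce (hrest.trans hback)
    have hbc : (bipartiteGraph (E \ redundantEdges ρ μ E)).Reachable (.inl b) (.inl c) :=
      (bipartiteGraph_adj_inl_inr.2 hbe').reachable.trans
        (bipartiteGraph_adj_inr_inl.2 hce).reachable
    exact hbc.trans (ih (hback.tail ⟨e, hbe, hce⟩))

end Cycles

section Robustness

variable {m n : ℕ} {ν ν' : Fin m → ℝ} {μ : Fin n → ℝ} {E : Finset (Fin m × Fin n)}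
  {x y : Fin m → Fin n → ℝ}

/-- If `S` were binding for `ν'` but not for `ν` on the nonredundant edges, it would enter the
definition of the CRP-gap with a defect `∑_S (ν' - ν)`, which is at most half the total
variation. -/
theorem sum_nbr_sdiff_redundantEdges_eq (hx : x ∈ transportationPolytope ν μ E)
    (hy : y ∈ transportationPolytope ν' μ E) (hTV : ∑ i, |ν' i - ν i| < 2 * crpGap ν μ E)
    {S : Finset (Fin m)} (hS : ∑ j ∈ nbr E S, μ j = ∑ i ∈ S, ν' i) :
    ∑ j ∈ nbr (E \ redundantEdges ν μ E) S, μ j = ∑ i ∈ S, ν i := by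
  refine ((sum_le_sum_nbr hx (fun i j h => mem_sdiff_redundantEdges_of_ne_zero hx h) S).lt_or_eq
    |>.resolve_left fun hlt => ?_).symm
  have hgap : crpGap ν μ E ≤ ∑ j ∈ nbr E S, μ j - ∑ i ∈ S, ν i := by
    refine csInf_le ⟨0, ?_⟩ ⟨S, hlt, rfl⟩
    rintro t ⟨C, -, rfl⟩
    linarith [sum_le_sum_nbr hx (fun i j h => mem_of_ne_zero hx h) C]
  have hdefect : 2 * ∑ i ∈ S, (ν' i - ν i) ≤ ∑ i, |ν' i - ν i| := by
    refine two_mul_sum_le_sum_abs ?_ S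
    rw [sum_sub_distrib, sum_eq_sum_of_mem_transportationPolytope hy,
      sum_eq_sum_of_mem_transportationPolytope hx, sub_self]
  rw [sum_sub_distrib] at hdefect
  linarith

theorem reflTransGen_demandStep_of_mem (hy : y ∈ transportationPolytope ν' μ E)
    (hTV : ∑ i, |ν' i - ν i| < 2 * crpGap ν μ E) {a a' : Fin m} {b : Fin n}
    (hab : (a, b) ∈ E \ redundantEdges ν μ E) (ha'b : (a', b) ∈ E \ redundantEdges ν μ E) :
    ReflTransGen (DemandStep E (E \ redundantEdges ν' μ E)) a a' := by
  set W := univ.filter (ReflTransGen (DemandStep E (E \ redundantEdges ν' μ E)) a)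
  have hW : ∀ {c}, c ∈ W ↔ ReflTransGen (DemandStep E (E \ redundantEdges ν' μ E)) a c :=
    by simp [W]
  have hbinding : ∑ j ∈ nbr E W, μ j = ∑ i ∈ W, ν' i := by
    refine (sum_nbr_eq_iff hy (fun i j h => mem_of_ne_zero hy h) W).2
      fun i hi j hj => ?_
    by_contra h
    obtain ⟨c, hc, hcj⟩ := mem_nbr.1 hj
    exact hi (hW.2 ((hW.1 hc).tail ⟨j, hcj, mem_sdiff_redundantEdges_of_ne_zero hy h⟩))
  obtain ⟨-, x, hx, hxa'b⟩ := mem_sdiff_redundantEdges.1 ha'b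
  have hcross := (sum_nbr_eq_iff hx (fun i j h => mem_sdiff_redundantEdges_of_ne_zero hx h) W).1
    (sum_nbr_sdiff_redundantEdges_eq hx hy hTV hbinding)
  by_contra ha'
  exact hxa'b (hcross a' (mt hW.1 ha') b (mem_nbr.2 ⟨a, hW.2 .refl, hab⟩))

theorem reachable_of_mem_sdiff_redundantEdges (hy : y ∈ transportationPolytope ν' μ E)
    (hTV : ∑ i, |ν' i - ν i| < 2 * crpGap ν μ E) {a a' : Fin m} {b : Fin n}
    (hab : (a, b) ∈ E \ redundantEdges ν μ E) (ha'b : (a', b) ∈ E \ redundantEdges ν μ E) :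
    (bipartiteGraph (E \ redundantEdges ν' μ E)).Reachable (.inl a) (.inl a') :=
  reachable_of_reflTransGen_of_reflTransGen ⟨y, hy⟩
    (reflTransGen_demandStep_of_mem hy hTV hab ha'b)
    (reflTransGen_demandStep_of_mem hy hTV ha'b hab)

end Robustness

theorem stmt_13_general {m n : ℕ}
    (ν : Fin m → ℝ) (μ : Fin n → ℝ) (E : Finset (Fin m × Fin n))
    (hμ : ∀ j, 0 < μ j)
    (hne : (transportationPolytope ν μ E).Nonempty) :
    ∀ ν' : Fin m → ℝ, (∀ i, 0 ≤ ν' i) →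
      (transportationPolytope ν' μ E).Nonempty →
      (∑ i, |ν' i - ν i|) < 2 * crpGap ν μ E →
      erpNumber ν' μ E ≤ erpNumber ν μ E := by
  rintro ν' - ⟨y, hy⟩ hTV
  obtain ⟨x, hx⟩ := hne
  choose feeder hfeeder using fun j => exists_mem_sdiff_redundantEdges hx (hμ j)
  set G' := bipartiteGraph (E \ redundantEdges ν' μ E)
  refine card_le_card_connectedComponent_of_surjective
    (Sum.elim (fun i => G'.connectedComponentMk (.inl i))
      fun j => G'.connectedComponentMk (.inl (feeder j))) ?_ ?_
  · rintro (i | j) (i' | j') hadj <;>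
      simp only [bipartiteGraph_adj_inl_inr, bipartiteGraph_adj_inr_inl,
        bipartiteGraph_not_adj_inl_inl, bipartiteGraph_not_adj_inr_inr] at hadj
    · exact ConnectedComponent.sound
        (reachable_of_mem_sdiff_redundantEdges hy hTV hadj (hfeeder j'))
    · exact ConnectedComponent.sound
        (reachable_of_mem_sdiff_redundantEdges hy hTV (hfeeder j) hadj)
  · refine ConnectedComponent.ind fun v => ?_
    rcases v with i | j
    · exact ⟨.inl i, rfl⟩
    · obtain ⟨i, hij⟩ := exists_mem_sdiff_redundantEdges hy (hμ j)
      exact ⟨.inl i, ConnectedComponent.connectedComponentMk_eq_of_adj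
        (bipartiteGraph_adj_inl_inr.2 hij)⟩

/-- robustness: perturbing the demand by less than twice the CRP-gap (in total
variation) cannot increase the ERP number. -/
theorem stmt_13 {m n : ℕ} (hm : 1 ≤ m) (hn : 1 ≤ n)
    (ν : Fin m → ℝ) (μ : Fin n → ℝ) (E : Finset (Fin m × Fin n))
    (hν : ∀ i, 0 < ν i) (hμ : ∀ j, 0 < μ j)
    (hne : (transportationPolytope ν μ E).Nonempty)
    (hC : ∃ C : Finset (Fin m),
      (∑ i ∈ C, ν i) < ∑ j ∈ nbr (E \ redundantEdges ν μ E) C, μ j) :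
    ∀ ν' : Fin m → ℝ, (∀ i, 0 ≤ ν' i) →
      (transportationPolytope ν' μ E).Nonempty →
      (∑ i, |ν' i - ν i|) < 2 * crpGap ν μ E →
      erpNumber ν' μ E ≤ erpNumber ν μ E :=
  stmt_13_general ν μ E hμ hne
end

section
/- Suppose ν ∈ ℝ^m and μ ∈ ℝ^n have all entries strictly positive and T_E(ν,μ) is nonempty, and let R be the CRP-graph relation of T_E(ν,μ). Then the CRP-graph is a directed acyclic graph: the transitive closure of R is irreflexive, i.e., there is no l ∈ {1,…,d} and no sequence l = l_0, l_1, …, l_k = l with k ≥ 1 and R(l_{t}, l_{t+1}) for every 0 ≤ t < k. -/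
open scoped Classical

/-- Sign of a vertex: `+1` on the demand side, `-1` on the supply side. -/
noncomputable def sgnSum {m n : ℕ} : (Fin m ⊕ Fin n) → ℝ := Sum.elim (fun _ => 1) (fun _ => -1)

/-- Transfer lemma: along a walk in `G(E')` we can shift margins at the two endpoints,
changing entries only on `E'` and by at most `|t| * length`. -/
lemma transfer_aux {m n : ℕ} (E' : Finset (Fin m × Fin n)) {u v : Fin m ⊕ Fin n}
    (p : (bipartiteGraph E').Walk u v) (x : Fin m → Fin n → ℝ) (t : ℝ) :
    ∃ y : Fin m → Fin n → ℝ,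
      (∀ i j, (i, j) ∉ E' → y i j = x i j) ∧
      (∀ i j, x i j - |t| * p.length ≤ y i j) ∧
      (∀ i, ∑ j, y i j = ∑ j, x i j + (if u = Sum.inl i then t else 0)
          + (if v = Sum.inl i then -(sgnSum u * sgnSum v) * t else 0)) ∧
      (∀ j, ∑ i, y i j = ∑ i, x i j + (if u = Sum.inr j then t else 0)
          + (if v = Sum.inr j then -(sgnSum u * sgnSum v) * t else 0)) := by
  induction p generalizing t with
  | @nil w =>
    have hs : sgnSum (m := m) (n := n) w * sgnSum w = 1 := by
      rcases w with a | b <;> simp [sgnSum]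
    refine ⟨x, fun _ _ _ => rfl, fun i j => by simp, fun i => ?_, fun j => ?_⟩
    · by_cases h : w = Sum.inl i <;> simp [h, sgnSum]
    · by_cases h : w = Sum.inr j <;> simp [h, sgnSum]
  | @cons u w v h q ih =>
    rw [bipartiteGraph, SimpleGraph.fromRel_adj] at h
    obtain ⟨hne, hc | hc⟩ := h <;> obtain ⟨i₀, j₀, hu, hw, hmem⟩ := hc
    · -- u = inl i₀, w = inr j₀
      subst hu; subst hw
      obtain ⟨y', h1, h2, h3, h4⟩ := ih (-t)
      refine ⟨fun a b => y' a b + if a = i₀ ∧ b = j₀ then t else 0, ?_, ?_, ?_, ?_⟩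
      · intro a b hab
        have hne' : ¬(a = i₀ ∧ b = j₀) := by rintro ⟨rfl, rfl⟩; exact hab hmem
        simp only [hne', if_false, add_zero]
        exact h1 a b hab
      · intro a b
        have h2' := h2 a b
        have hbd : -|t| ≤ (if a = i₀ ∧ b = j₀ then t else 0) := by
          split
          · exact neg_abs_le t
          · simp
        simp only [SimpleGraph.Walk.length_cons, Nat.cast_add, Nat.cast_one, abs_neg] at *
        nlinarith [abs_nonneg t]
      · intro a
        have hsum : ∑ b, (if a = i₀ ∧ b = j₀ then t else 0) = if a = i₀ then t else 0 := by
          by_cases ha : a = i₀ <;> simp [ha]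
        rw [Finset.sum_add_distrib, hsum, h3 a]
        clear h1 h2 h3 h4 ih
        rcases v with c | c <;> split_ifs <;> simp_all [sgnSum] <;> ring
      · intro b
        have hsum : ∑ a, (if a = i₀ ∧ b = j₀ then t else 0) = if b = j₀ then t else 0 := by
          by_cases hb : b = j₀ <;> simp [hb]
        rw [Finset.sum_add_distrib, hsum, h4 b]
        clear h1 h2 h3 h4 ih
        rcases v with c | c <;> split_ifs <;> simp_all [sgnSum] <;> ring
    · -- w = inl i₀, u = inr j₀
      subst hu; subst hw
      obtain ⟨y', h1, h2, h3, h4⟩ := ih (-t)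
      refine ⟨fun a b => y' a b + if a = i₀ ∧ b = j₀ then t else 0, ?_, ?_, ?_, ?_⟩
      · intro a b hab
        have hne' : ¬(a = i₀ ∧ b = j₀) := by rintro ⟨rfl, rfl⟩; exact hab hmem
        simp only [hne', if_false, add_zero]
        exact h1 a b hab
      · intro a b
        have h2' := h2 a b
        have hbd : -|t| ≤ (if a = i₀ ∧ b = j₀ then t else 0) := by
          split
          · exact neg_abs_le t
          · simp
        simp only [SimpleGraph.Walk.length_cons, Nat.cast_add, Nat.cast_one, abs_neg] at *
        nlinarith [abs_nonneg t]
      · intro a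
        have hsum : ∑ b, (if a = i₀ ∧ b = j₀ then t else 0) = if a = i₀ then t else 0 := by
          by_cases ha : a = i₀ <;> simp [ha]
        rw [Finset.sum_add_distrib, hsum, h3 a]
        clear h1 h2 h3 h4 ih
        rcases v with c | c <;> split_ifs <;> simp_all [sgnSum] <;> ring
      · intro b
        have hsum : ∑ a, (if a = i₀ ∧ b = j₀ then t else 0) = if b = j₀ then t else 0 := by
          by_cases hb : b = j₀ <;> simp [hb]
        rw [Finset.sum_add_distrib, hsum, h4 b]
        clear h1 h2 h3 h4 ih
        rcases v with c | c <;> split_ifs <;> simp_all [sgnSum] <;> ring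

set_option maxHeartbeats 1000000 in
/-- the CRP-graph is a DAG: the transitive closure of the CRP-graph relation is
irreflexive. -/
theorem stmt_15 {m n : ℕ} (hm : 1 ≤ m) (hn : 1 ≤ n)
    (ν : Fin m → ℝ) (μ : Fin n → ℝ) (E : Finset (Fin m × Fin n))
    (hν : ∀ i, 0 < ν i) (hμ : ∀ j, 0 < μ j)
    (hne : (transportationPolytope ν μ E).Nonempty) :
    ∀ c, ¬ Relation.TransGen (crpRel ν μ E) c c := by
  classical
  set E' : Finset (Fin m × Fin n) := E \ redundantEdges ν μ E with hE'def
  obtain ⟨x₀, hx₀⟩ := hne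
  -- E' is nonempty
  have hE'ne : E'.Nonempty := by
    have i0 : Fin m := ⟨0, hm⟩
    have hrow := hx₀.2.1 i0
    have hpos : 0 < ∑ j, x₀ i0 j := hrow ▸ hν i0
    have : ∃ j, 0 < x₀ i0 j := by
      by_contra hcon
      push_neg at hcon
      have : ∑ j, x₀ i0 j ≤ 0 := Finset.sum_nonpos fun j _ => hcon j
      linarith
    obtain ⟨j, hj⟩ := this
    refine ⟨(i0, j), ?_⟩
    rw [Finset.mem_sdiff]
    constructor
    · by_contra hE
      exact absurd (hx₀.2.2.2 i0 j hE) (ne_of_gt hj)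
    · intro hred
      rw [redundantEdges, Finset.mem_filter] at hred
      exact absurd (hred.2 x₀ hx₀) (ne_of_gt hj)
  -- for each edge, a witness point positive there if the edge is non-redundant
  have hwit : ∀ e : Fin m × Fin n, ∃ x ∈ transportationPolytope ν μ E,
      (e ∈ E' → 0 < x e.1 e.2) := by
    intro e
    by_cases he : e ∈ E'
    · rw [hE'def, Finset.mem_sdiff] at he
      obtain ⟨heE, her⟩ := he
      rw [redundantEdges, Finset.mem_filter] at her
      push_neg at her
      obtain ⟨x, hxT, hx0⟩ := her heE
      exact ⟨x, hxT, fun _ => lt_of_le_of_ne (hxT.1 e.1 e.2) (Ne.symm hx0)⟩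
    · exact ⟨x₀, hx₀, fun h => absurd h he⟩
  choose f hfT hfpos using hwit
  have hcard : (0 : ℝ) < E'.card := by exact_mod_cast Finset.card_pos.mpr hE'ne
  set xs : Fin m → Fin n → ℝ := fun i j => (E'.card : ℝ)⁻¹ * ∑ e ∈ E', f e i j with hxsdef
  have hxsT : xs ∈ transportationPolytope ν μ E := by
    refine ⟨fun i j => ?_, fun i => ?_, fun j => ?_, fun i j hij => ?_⟩
    · exact mul_nonneg (by positivity) (Finset.sum_nonneg fun e _ => (hfT e).1 i j)
    · rw [hxsdef]
      simp only
      rw [← Finset.mul_sum, Finset.sum_comm]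
      have : ∀ e ∈ E', ∑ j, f e i j = ν i := fun e _ => (hfT e).2.1 i
      rw [Finset.sum_congr rfl this, Finset.sum_const, nsmul_eq_mul]
      field_simp
    · rw [hxsdef]
      simp only
      rw [← Finset.mul_sum, Finset.sum_comm]
      have : ∀ e ∈ E', ∑ i, f e i j = μ j := fun e _ => (hfT e).2.2.1 j
      rw [Finset.sum_congr rfl this, Finset.sum_const, nsmul_eq_mul]
      field_simp
    · rw [hxsdef]
      simp only
      rw [Finset.sum_congr rfl fun e _ => (hfT e).2.2.2 i j hij, Finset.sum_const]
      simp
  have hxspos : ∀ e ∈ E', 0 < xs e.1 e.2 := by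
    intro e he
    have h1 : f e e.1 e.2 ≤ ∑ e' ∈ E', f e' e.1 e.2 :=
      Finset.single_le_sum (fun e' _ => (hfT e').1 e.1 e.2) he
    have h2 : 0 < f e e.1 e.2 := hfpos e he
    have : 0 < ∑ e' ∈ E', f e' e.1 e.2 := lt_of_lt_of_le h2 h1
    exact mul_pos (by positivity) this
  -- the key induction along the transitive closure
  have key : ∀ c₁ c₂, Relation.TransGen (crpRel ν μ E) c₁ c₂ →
      ∃ (B : ℕ) (a₀ : Fin m) (b : Fin n) (e : Fin m × Fin n),
        (bipartiteGraph E').connectedComponentMk (Sum.inl a₀) = c₁ ∧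
        (bipartiteGraph E').connectedComponentMk (Sum.inr b) = c₂ ∧
        e ∈ redundantEdges ν μ E ∧
        ∀ ε : ℝ, 0 < ε → ∃ y : Fin m → Fin n → ℝ,
          (∀ i j, (i, j) ∉ E → y i j = 0) ∧
          (∀ i j, (i, j) ∈ E' → xs i j - ε * B ≤ y i j) ∧
          (∀ i j, (i, j) ∉ E' → xs i j ≤ y i j) ∧
          ε ≤ y e.1 e.2 ∧
          (∀ i, ∑ j, y i j = ν i + (if i = a₀ then ε else 0)) ∧
          (∀ j, ∑ i, y i j = μ j + (if j = b then ε else 0)) := by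
    intro c₁ c₂ h
    induction h with
    | single hr =>
      obtain ⟨hcne, i, j, hijE, hc1, hc2⟩ := hr
      have hijE' : (i, j) ∉ E' := by
        intro hmem
        apply hcne
        rw [← hc1, ← hc2]
        exact SimpleGraph.ConnectedComponent.eq.mpr
          (SimpleGraph.Adj.reachable (by
            rw [bipartiteGraph, SimpleGraph.fromRel_adj]
            exact ⟨by simp, Or.inl ⟨i, j, rfl, rfl, hmem⟩⟩))
      have hijred : (i, j) ∈ redundantEdges ν μ E := by
        by_contra hcon
        exact hijE' (Finset.mem_sdiff.mpr ⟨hijE, hcon⟩)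
      have hxs0 : xs i j = 0 := by
        rw [redundantEdges, Finset.mem_filter] at hijred
        exact hijred.2 xs hxsT
      refine ⟨0, i, j, (i, j), hc1, hc2, hijred, fun ε hε => ?_⟩
      refine ⟨fun a b => xs a b + if a = i ∧ b = j then ε else 0, ?_, ?_, ?_, ?_, ?_, ?_⟩
      · intro a b hab
        have : ¬(a = i ∧ b = j) := by rintro ⟨rfl, rfl⟩; exact hab hijE
        simp only [this, if_false, add_zero]
        exact hxsT.2.2.2 a b hab
      · intro a b _
        dsimp only
        have : (0:ℝ) ≤ if a = i ∧ b = j then ε else 0 := by positivity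
        push_cast
        linarith
      · intro a b _
        dsimp only
        have : (0:ℝ) ≤ if a = i ∧ b = j then ε else 0 := by positivity
        linarith
      · dsimp only
        simp [hxs0]
      · intro a
        have hsum : ∑ b, (if a = i ∧ b = j then ε else 0) = if a = i then ε else 0 := by
          by_cases ha : a = i <;> simp [ha]
        rw [Finset.sum_add_distrib, hsum, hxsT.2.1 a]
      · intro b
        have hsum : ∑ a, (if a = i ∧ b = j then ε else 0) = if b = j then ε else 0 := by
          by_cases hb : b = j <;> simp [hb]
        rw [Finset.sum_add_distrib, hsum, hxsT.2.2.1 b]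
    | tail htg hr ih =>
      obtain ⟨B, a₀, b, e, hca₀, hcb, heRed, hQ⟩ := ih
      obtain ⟨hcne, a', b'', haE, hca', hcb''⟩ := hr
      have hreach : (bipartiteGraph E').Reachable (Sum.inr b) (Sum.inl a') :=
        SimpleGraph.ConnectedComponent.eq.mp (hcb.trans hca'.symm)
      obtain ⟨p⟩ := hreach
      have heE' : e ∉ E' := by
        rw [hE'def, Finset.mem_sdiff]
        rintro ⟨-, hcontra⟩
        exact hcontra heRed
      refine ⟨B + p.length, a₀, b'', e, hca₀, hcb'', heRed, fun ε hε => ?_⟩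
      obtain ⟨y, hy1, hy2, hy3, hy4, hy5, hy6⟩ := hQ ε hε
      obtain ⟨y', hz1, hz2, hz3, hz4⟩ := transfer_aux E' p y (-ε)
      have hsgn : -(sgnSum (m := m) (n := n) (Sum.inr b) * sgnSum (m := m) (n := n) (Sum.inl a')) * (-ε) = -ε := by
        simp [sgnSum]
      refine ⟨fun a b2 => y' a b2 + if a = a' ∧ b2 = b'' then ε else 0, ?_, ?_, ?_, ?_, ?_, ?_⟩
      · intro i j hij
        have hne2 : ¬(i = a' ∧ j = b'') := by rintro ⟨rfl, rfl⟩; exact hij haE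
        have hijE' : (i, j) ∉ E' := fun hmem => hij (Finset.mem_sdiff.mp hmem).1
        simp only [hne2, if_false, add_zero]
        rw [hz1 i j hijE']
        exact hy1 i j hij
      · intro i j hij
        dsimp only
        have hb1 := hz2 i j
        have hb2 := hy2 i j hij
        have : (0:ℝ) ≤ if i = a' ∧ j = b'' then ε else 0 := by positivity
        have habs : |(-ε)| = ε := by rw [abs_neg, abs_of_pos hε]
        rw [habs] at hb1
        push_cast
        nlinarith
      · intro i j hij
        dsimp only
        rw [hz1 i j hij]
        have : (0:ℝ) ≤ if i = a' ∧ j = b'' then ε else 0 := by positivity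
        have := hy3 i j hij
        linarith
      · dsimp only
        have h1 : y' e.1 e.2 = y e.1 e.2 := hz1 e.1 e.2 heE'
        have : (0:ℝ) ≤ if e.1 = a' ∧ e.2 = b'' then ε else 0 := by positivity
        simp only [h1]
        linarith
      · intro i
        have hsum : ∑ b2, (if i = a' ∧ b2 = b'' then ε else 0) = if i = a' then ε else 0 := by
          by_cases hi : i = a' <;> simp [hi]
        rw [Finset.sum_add_distrib, hsum, hz3 i, hy5 i, hsgn]
        have h5 : ¬((Sum.inr b : Fin m ⊕ Fin n) = Sum.inl i) := by simp
        rw [if_neg h5]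
        by_cases hi : i = a'
        · subst hi
          simp
        · have : ¬((Sum.inl a' : Fin m ⊕ Fin n) = Sum.inl i) := by simp [eq_comm, hi]; exact fun h => hi h.symm
          rw [if_neg this, if_neg hi]
          ring
      · intro j
        have hsum : ∑ a, (if a = a' ∧ j = b'' then ε else 0) = if j = b'' then ε else 0 := by
          by_cases hj : j = b'' <;> simp [hj]
        rw [Finset.sum_add_distrib, hsum, hz4 j, hy6 j, hsgn]
        have h5 : ¬((Sum.inl a' : Fin m ⊕ Fin n) = Sum.inr j) := by simp
        rw [if_neg h5, add_zero]
        by_cases hj : j = b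
        · subst hj
          rw [if_pos rfl, if_pos rfl]
          ring
        · have : ¬((Sum.inr b : Fin m ⊕ Fin n) = Sum.inr j) := by simp; exact fun h => hj h.symm
          rw [if_neg this, if_neg hj]
          ring
  -- conclude
  intro c0 hc0
  obtain ⟨B, a₀, b, e, hca₀, hcb, heRed, hQ⟩ := key c0 c0 hc0
  have heE' : e ∉ E' := by
    rw [hE'def, Finset.mem_sdiff]
    rintro ⟨-, hcontra⟩
    exact hcontra heRed
  have hreach : (bipartiteGraph E').Reachable (Sum.inr b) (Sum.inl a₀) :=
    SimpleGraph.ConnectedComponent.eq.mp (hcb.trans hca₀.symm)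
  obtain ⟨p⟩ := hreach
  set δ : ℝ := E'.inf' hE'ne (fun e => xs e.1 e.2) with hδdef
  have hδpos : 0 < δ := by
    rw [hδdef]
    rw [Finset.lt_inf'_iff]
    exact fun e he => hxspos e he
  set ε : ℝ := δ / (B + p.length + 1) with hεdef
  have hεpos : 0 < ε := by positivity
  obtain ⟨y, hy1, hy2, hy3, hy4, hy5, hy6⟩ := hQ ε hεpos
  obtain ⟨z, hz1, hz2, hz3, hz4⟩ := transfer_aux E' p y (-ε)
  have hsgn : -(sgnSum (m := m) (n := n) (Sum.inr b) * sgnSum (m := m) (n := n) (Sum.inl a₀)) * (-ε) = -ε := by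
    simp [sgnSum]
  have hεsmall : ε * (B + p.length) < δ := by
    rw [hεdef]
    rw [div_mul_eq_mul_div, div_lt_iff₀ (by positivity)]
    nlinarith
  have habs : |(-ε)| = ε := by rw [abs_neg, abs_of_pos hεpos]
  have hzT : z ∈ transportationPolytope ν μ E := by
    refine ⟨fun i j => ?_, fun i => ?_, fun j => ?_, fun i j hij => ?_⟩
    · by_cases hij : (i, j) ∈ E'
      · have hb1 := hz2 i j
        rw [habs] at hb1
        have hb2 := hy2 i j hij
        have hδle : δ ≤ xs i j := Finset.inf'_le (fun e => xs e.1 e.2) hij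
        push_cast at hb1 hb2 ⊢
        nlinarith
      · rw [hz1 i j hij]
        have := hy3 i j hij
        have := hxsT.1 i j
        linarith
    · rw [hz3 i, hy5 i, hsgn]
      have h5 : ¬((Sum.inr b : Fin m ⊕ Fin n) = Sum.inl i) := by simp
      rw [if_neg h5]
      by_cases hi : i = a₀
      · subst hi; simp
      · have : ¬((Sum.inl a₀ : Fin m ⊕ Fin n) = Sum.inl i) := by simp; exact fun h => hi h.symm
        rw [if_neg this, if_neg hi]
        ring
    · rw [hz4 j, hy6 j, hsgn]
      have h5 : ¬((Sum.inl a₀ : Fin m ⊕ Fin n) = Sum.inr j) := by simp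
      rw [if_neg h5, add_zero]
      by_cases hj : j = b
      · subst hj; rw [if_pos rfl, if_pos rfl]; ring
      · have : ¬((Sum.inr b : Fin m ⊕ Fin n) = Sum.inr j) := by simp; exact fun h => hj h.symm
        rw [if_neg this, if_neg hj]
        ring
    · have hijE' : (i, j) ∉ E' := fun hmem => hij (Finset.mem_sdiff.mp hmem).1
      rw [hz1 i j hijE']
      exact hy1 i j hij
  have hz0 : z e.1 e.2 = 0 := by
    rw [redundantEdges, Finset.mem_filter] at heRed
    exact heRed.2 z hzT
  have : ε ≤ z e.1 e.2 := by
    rw [hz1 e.1 e.2 heE']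
    exact hy4
  linarith
end
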